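/- arXiv:1610.09666 — 13 statements merged into one kernel-verified Lean document; each statement's English description precedes it below -/
import Mathlib

section
/- For all integers k ≥ 1 and j ≥ 2, the generalized transformation coefficients satisfy the recurrence j · S(k, j) = S(k−1, j) − S(k, j−1); equivalently, S(k, j) = −(1/j) · S(k, j−1) + (1/j) · S(k−1, j). -/
/-- The generalized transformation coefficient
`S k j = (1/j!) · Σ_{m=1}^{j} C(j,m) · (−1)^{j−m} · m^{−k}`. -/
noncomputable def S (k j : ℕ) : ℝ :=
  (1 / (Nat.factorial j : ℝ)) *
    ∑ m ∈ Finset.Icc 1 j, (Nat.choose j m : ℝ) * (-1 : ℝ) ^ (j - m) / (m : ℝ) ^ k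

/-! The recurrence is a termwise identity: after clearing `j!` it reads
`j C(j,m) (-1)^(j-m) + j C(j-1,m) (-1)^(j-1-m) = m C(j,m) (-1)^(j-m)`, which is
`j C(j-1,m) = (j-m) C(j,m)`; the extra factor `m` turns `m^(-k)` into `m^(-(k-1))`. -/

open Finset

section AlternatingBinomial

variable {R : Type*} [CommRing R]

-- For `m > n` both sides vanish, so truncated subtraction in the exponent does no harm.
lemma choose_mul_neg_one_pow_sub (n m : ℕ) :
    (n.choose m : R) * (-1) ^ (n - m) = -((n.choose m : R) * (-1) ^ (n + 1 - m)) := by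
  rcases le_or_gt m n with hmn | hnm
  · rw [Nat.sub_add_comm hmn, pow_succ]
    ring
  · simp [Nat.choose_eq_zero_of_lt hnm]

lemma succ_mul_choose_mul_neg_one_pow_add {n m : ℕ} (hm : m ≤ n + 1) :
    (n + 1 : R) * (n + 1).choose m * (-1) ^ (n + 1 - m)
        + (n + 1 : R) * n.choose m * (-1) ^ (n - m)
      = (m : R) * (n + 1).choose m * (-1) ^ (n + 1 - m) := by
  have hchoose := congrArg (Nat.cast (R := R)) (Nat.choose_mul_succ_eq n m)
  push_cast [Nat.cast_sub hm] at hchoose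
  rw [mul_assoc _ (n.choose m : R), choose_mul_neg_one_pow_sub]
  linear_combination (-(-1 : R) ^ (n + 1 - m)) * hchoose

lemma succ_mul_sum_choose_mul_neg_one_pow_add (n : ℕ) (g : ℕ → R) :
    (n + 1 : R) * ∑ m ∈ Icc 1 (n + 1), ((n + 1).choose m : R) * (-1) ^ (n + 1 - m) * g m
        + (n + 1 : R) * ∑ m ∈ Icc 1 n, (n.choose m : R) * (-1) ^ (n - m) * g m
      = ∑ m ∈ Icc 1 (n + 1), ((n + 1).choose m : R) * (-1) ^ (n + 1 - m) * (m * g m) := by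
  have hextend : ∑ m ∈ Icc 1 n, (n.choose m : R) * (-1) ^ (n - m) * g m
      = ∑ m ∈ Icc 1 (n + 1), (n.choose m : R) * (-1) ^ (n - m) * g m := by
    rw [sum_Icc_succ_top (by omega), Nat.choose_succ_self]
    simp
  rw [hextend, mul_sum, mul_sum, ← sum_add_distrib]
  refine sum_congr rfl fun m hm => ?_
  have hterm := succ_mul_choose_mul_neg_one_pow_add (R := R) (mem_Icc.mp hm).2
  linear_combination g m * hterm

end AlternatingBinomial

lemma S_eq_inv_factorial_mul_sum (k j : ℕ) :
    S k j = (j.factorial : ℝ)⁻¹ *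
      ∑ m ∈ Icc 1 j, (j.choose m : ℝ) * (-1) ^ (j - m) * ((m : ℝ) ^ k)⁻¹ := by
  simp only [S, div_eq_mul_inv, one_mul]

theorem stmt_0_general (k j : ℕ) (hk : 1 ≤ k) :
    (j : ℝ) * S k j = S (k - 1) j - S k (j - 1) := by
  obtain ⟨l, rfl⟩ := Nat.exists_eq_add_of_le' hk
  cases j with
  | zero => simp [S]
  | succ n =>
    have hshift : ∑ m ∈ Icc 1 (n + 1), ((n + 1).choose m : ℝ) * (-1) ^ (n + 1 - m) * ((m : ℝ) ^ l)⁻¹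
        = ∑ m ∈ Icc 1 (n + 1),
            ((n + 1).choose m : ℝ) * (-1) ^ (n + 1 - m) * (m * ((m : ℝ) ^ (l + 1))⁻¹) := by
      refine sum_congr rfl fun m hm => ?_
      have hm0 : (m : ℝ) ≠ 0 := Nat.cast_ne_zero.mpr (by grind)
      rw [pow_succ', mul_inv, mul_inv_cancel_left₀ hm0]
    simp only [S_eq_inv_factorial_mul_sum, Nat.add_sub_cancel]
    rw [hshift, ← succ_mul_sum_choose_mul_neg_one_pow_add, Nat.factorial_succ]
    push_cast
    field_simp
    ring

theorem stmt_0 (k j : ℕ) (hk : 1 ≤ k) (hj : 2 ≤ j) :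
    (j : ℝ) * S k j = S (k - 1) j - S k (j - 1) :=
  stmt_0_general k j hk
end

section
/- For every integer j ≥ 2 and every real number z with |z| < 1, the ordinary generating function of the generalized transformation coefficients in the upper index satisfies Σ_{k=0}^{∞} S(k, j) · z^k = (−1)^{j+1} / ((1−z)(2−z)···(j−z)), i.e. the sum equals (−1)^{j+1} divided by Π_{i=1}^{j} (i − z). -/
/-! Summing the geometric series in `k` turns the generating function into
`(1/j!) Σ_m C(j,m) (-1)^(j-m) m/(m-z)`. Since `m C(j,m) = j C(j-1,m-1)`, this is `j/j!` times the
`(j-1)`-st forward difference of `x ↦ 1/x` at `x = 1 - z`, and by induction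
`Δ^n (1/x) = (-1)^n n! / (x (x+1) ⋯ (x+n))`. -/

open Finset

theorem prod_range_succ_add_natCast {K : Type*} [Field K] (n : ℕ) (x : K) :
    ∏ i ∈ range (n + 1), (x + i) = x * ∏ i ∈ range n, (x + 1 + i) := by
  rw [prod_range_succ', mul_comm]
  push_cast
  simp only [add_zero, ← add_assoc, add_right_comm x]

theorem fwdDiff_iter_inv {K : Type*} [Field K] (n : ℕ) (x : K)
    (hx : ∀ i ∈ range (n + 1), x + i ≠ 0) :
    (fwdDiff 1)^[n] (fun y : K ↦ y⁻¹) x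
      = (-1) ^ n * n.factorial / ∏ i ∈ range (n + 1), (x + i) := by
  induction n generalizing x with
  | zero => simp
  | succ n ih =>
    have hx' : ∀ i ∈ range (n + 1), x + 1 + i ≠ 0 := fun i hi ↦ by
      simpa [add_assoc, add_comm (1 : K)] using hx (i + 1) (by simp at hi ⊢; omega)
    have hP : ∏ i ∈ range (n + 2), (x + i) ≠ 0 := prod_ne_zero_iff.2 hx
    rw [Function.iterate_succ_apply', fwdDiff, ih (x + 1) hx',
      ih x fun i hi ↦ hx i (by simp at hi ⊢; omega)]
    rw [prod_range_succ_add_natCast (n + 1), prod_range_succ] at hP ⊢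
    rw [prod_range_succ_add_natCast n]
    simp only [mul_ne_zero_iff] at hP
    obtain ⟨hx0, hQ, hlast⟩ := hP
    rw [Nat.factorial_succ]
    push_cast
    field_simp
    ring

theorem sum_range_neg_one_pow_mul_choose_div {K : Type*} [Field K] (n : ℕ) (x : K)
    (hx : ∀ i ∈ range (n + 1), x + i ≠ 0) :
    ∑ k ∈ range (n + 1), (-1) ^ (n - k) * n.choose k / (x + k)
      = (-1) ^ n * n.factorial / ∏ i ∈ range (n + 1), (x + i) := by
  rw [← fwdDiff_iter_inv n x hx, fwdDiff_iter_eq_sum_shift]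
  refine sum_congr rfl fun k _ ↦ ?_
  simp [div_eq_mul_inv, zsmul_eq_mul]

theorem sum_Icc_choose_mul_neg_one_pow_mul_div_sub {K : Type*} [Field K] {j : ℕ} (hj : j ≠ 0)
    (z : K) (hz : ∀ i ∈ Icc 1 j, (i : K) ≠ z) :
    ∑ m ∈ Icc 1 j, j.choose m * (-1) ^ (j - m) * (m / (m - z))
      = (-1) ^ (j + 1) * j.factorial / ∏ i ∈ Icc 1 j, ((i : K) - z) := by
  obtain ⟨n, rfl⟩ := Nat.exists_eq_add_one_of_ne_zero hj
  have hx : ∀ i ∈ range (n + 1), 1 - z + i ≠ 0 := fun i hi ↦ by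
    have := hz (i + 1) (by simp at hi ⊢; omega)
    push_cast at this
    contrapose! this
    linear_combination this
  have hshift : ∀ i : ℕ, ((i + 1 : ℕ) : K) - z = 1 - z + i := fun i ↦ by push_cast; ring
  have hprod : ∏ i ∈ Icc 1 (n + 1), ((i : K) - z) = ∏ i ∈ range (n + 1), (1 - z + i) := by
    rw [← Ico_add_one_right_eq_Icc, prod_Ico_eq_prod_range]
    simp only [add_tsub_cancel_right, add_comm 1, hshift]
  calc ∑ m ∈ Icc 1 (n + 1), (n + 1).choose m * (-1) ^ (n + 1 - m) * (m / (m - z))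
      = ∑ k ∈ range (n + 1),
          (n + 1).choose (k + 1) * (-1) ^ (n - k) * ((k + 1 : ℕ) / (1 - z + k)) := by
        rw [← Ico_add_one_right_eq_Icc, sum_Ico_eq_sum_range]
        simp only [add_tsub_cancel_right, add_comm 1, hshift, Nat.add_sub_add_right]
    _ = (n + 1) * ∑ k ∈ range (n + 1), (-1) ^ (n - k) * n.choose k / (1 - z + k) := by
        rw [mul_sum]
        refine sum_congr rfl fun k _ ↦ ?_
        have hc : ((n + 1).choose (k + 1) : K) * (k + 1 : ℕ) = (n + 1) * n.choose k := by
          simpa using congrArg (Nat.cast : ℕ → K) (Nat.add_one_mul_choose_eq n k).symm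
        linear_combination (-1) ^ (n - k) / (1 - z + k) * hc
    _ = _ := by
        rw [sum_range_neg_one_pow_mul_choose_div n _ hx, hprod, Nat.factorial_succ]
        push_cast
        ring

theorem hasSum_S_mul_pow (j : ℕ) {z : ℝ} (hz : |z| < 1) :
    HasSum (fun k ↦ S k j * z ^ k)
      (1 / j.factorial * ∑ m ∈ Icc 1 j, j.choose m * (-1) ^ (j - m) * (m / (m - z))) := by
  have hgeom : ∀ m ∈ Icc 1 j,
      HasSum (fun k ↦ (j.choose m * (-1) ^ (j - m) / (m : ℝ) ^ k) * z ^ k)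
        (j.choose m * (-1) ^ (j - m) * (m / (m - z))) := fun m hm ↦ by
    have hm : (1 : ℝ) ≤ m := by exact_mod_cast (mem_Icc.1 hm).1
    have hm0 : (0 : ℝ) < m := by linarith
    have hmz : (m : ℝ) - z ≠ 0 := by linarith [le_abs_self z]
    have hzm : |z / m| < 1 := by
      rw [abs_div, abs_of_pos hm0, div_lt_one hm0]
      linarith
    have hratio : (1 - z / m)⁻¹ = m / (m - z) := by field_simp
    refine hratio ▸ ((hasSum_geometric_of_abs_lt_one hzm).mul_left _).congr_fun fun k ↦ ?_
    rw [div_pow]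
    ring
  simpa only [S, sum_mul, ← mul_sum, mul_assoc] using
    (hasSum_sum hgeom).mul_left (1 / (j.factorial : ℝ))

theorem stmt_1 (j : ℕ) (hj : 2 ≤ j) (z : ℝ) (hz : |z| < 1) :
    HasSum (fun k : ℕ => S k j * z ^ k)
      ((-1 : ℝ) ^ (j + 1) / ∏ i ∈ Finset.Icc 1 j, ((i : ℝ) - z)) := by
  have hpoles : ∀ i ∈ Icc 1 j, (i : ℝ) ≠ z := fun i hi ↦ by
    have : (1 : ℝ) ≤ i := by exact_mod_cast (mem_Icc.1 hi).1
    linarith [le_abs_self z]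
  convert hasSum_S_mul_pow j hz using 1
  rw [sum_Icc_choose_mul_neg_one_pow_mul_div_sub (by omega) z hpoles]
  field_simp
end

section
/- For every integer j ≥ 1, Σ_{m=1}^{j} C(j, m) · (−1)^{j−m} / m² = (−1)^{j−1} · (H_j² + H_j^{(2)}) / 2; equivalently, S(2, j) = (−1)^{j−1} · (H_j² + H_j^{(2)}) / (2 · j!). -/
/-- The `r`-order harmonic number `H r n = Σ_{m=1}^{n} 1/m^r`. -/
noncomputable def H (r n : ℕ) : ℝ :=
  ∑ m ∈ Finset.Icc 1 n, 1 / (m : ℝ) ^ r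

lemma icc_to_range (f : ℕ → ℝ) (n : ℕ) :
    ∑ m ∈ Finset.Icc 1 n, f m = ∑ k ∈ Finset.range n, f (k + 1) := by
  rw [← Finset.Ico_add_one_right_eq_Icc, Finset.sum_Ico_eq_sum_range]
  simp [add_comm]

lemma H_range (r n : ℕ) : H r n = ∑ k ∈ Finset.range n, 1 / ((k : ℝ) + 1) ^ r := by
  rw [H, icc_to_range]; push_cast; rfl

lemma key (n k : ℕ) :
    ((n.choose k : ℝ)) / ((k : ℝ) + 1) = ((n + 1).choose (k + 1) : ℝ) / ((n : ℝ) + 1) := by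
  rw [div_eq_div_iff (by positivity) (by positivity)]
  have h := Nat.add_one_mul_choose_eq n k
  have h2 : ((n : ℝ) + 1) * (n.choose k : ℝ) = ((n + 1).choose (k + 1) : ℝ) * ((k : ℝ) + 1) := by
    exact_mod_cast h
  linarith

lemma alt_sum (n : ℕ) :
    ∑ k ∈ Finset.range (n + 1), ((n + 1).choose (k + 1) : ℝ) * (-1 : ℝ) ^ k = 1 := by
  have h := Int.alternating_sum_range_choose_of_ne (n := n + 1) (Nat.succ_ne_zero n)
  rw [Finset.sum_range_succ'] at h
  simp only [pow_zero, Nat.choose_zero_right, Nat.cast_one, one_mul] at h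
  have h' : ∑ k ∈ Finset.range (n + 1), ((-1 : ℤ) ^ (k + 1) * ((n+1).choose (k+1) : ℤ)) = -1 := by
    linarith
  have : ∑ k ∈ Finset.range (n + 1), ((-1 : ℤ) ^ k * ((n+1).choose (k+1) : ℤ)) = 1 := by
    have : ∑ k ∈ Finset.range (n + 1), ((-1 : ℤ) ^ (k + 1) * ((n+1).choose (k+1) : ℤ))
        = -∑ k ∈ Finset.range (n + 1), ((-1 : ℤ) ^ k * ((n+1).choose (k+1) : ℤ)) := by
      rw [← Finset.sum_neg_distrib]
      exact Finset.sum_congr rfl fun k _ => by ring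
    omega
  calc ∑ k ∈ Finset.range (n + 1), ((n + 1).choose (k + 1) : ℝ) * (-1 : ℝ) ^ k
      = ((∑ k ∈ Finset.range (n + 1), ((-1 : ℤ) ^ k * ((n+1).choose (k+1) : ℤ)) : ℤ) : ℝ) := by
        push_cast; exact Finset.sum_congr rfl fun k _ => by ring
    _ = 1 := by rw [this]; norm_num

lemma lemB (n : ℕ) :
    ∑ k ∈ Finset.range n, (n.choose (k + 1) : ℝ) * (-1 : ℝ) ^ k / ((k : ℝ) + 1) = H 1 n := by
  induction n with
  | zero => simp [H]
  | succ n ih =>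
    have pascal : ∀ k, ((n+1).choose (k+1) : ℝ) = (n.choose k : ℝ) + (n.choose (k+1) : ℝ) := by
      intro k; rw [Nat.choose_succ_succ]; push_cast; ring
    have split : ∑ k ∈ Finset.range (n+1), ((n+1).choose (k + 1) : ℝ) * (-1 : ℝ) ^ k / ((k : ℝ) + 1)
        = (∑ k ∈ Finset.range (n+1), (n.choose k : ℝ) * (-1 : ℝ) ^ k / ((k : ℝ) + 1))
        + ∑ k ∈ Finset.range (n+1), (n.choose (k+1) : ℝ) * (-1 : ℝ) ^ k / ((k : ℝ) + 1) := by
      rw [← Finset.sum_add_distrib]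
      exact Finset.sum_congr rfl fun k _ => by rw [pascal k]; ring
    have s2 : ∑ k ∈ Finset.range (n+1), (n.choose (k+1) : ℝ) * (-1 : ℝ) ^ k / ((k : ℝ) + 1)
        = H 1 n := by
      rw [Finset.sum_range_succ, Nat.choose_succ_self]
      simpa using ih
    have s1 : ∑ k ∈ Finset.range (n+1), (n.choose k : ℝ) * (-1 : ℝ) ^ k / ((k : ℝ) + 1)
        = 1 / ((n : ℝ) + 1) := by
      have : ∀ k ∈ Finset.range (n+1), (n.choose k : ℝ) * (-1 : ℝ) ^ k / ((k : ℝ) + 1)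
          = ((n + 1).choose (k + 1) : ℝ) * (-1 : ℝ) ^ k / ((n : ℝ) + 1) := by
        intro k _
        calc (n.choose k : ℝ) * (-1 : ℝ) ^ k / ((k : ℝ) + 1)
            = ((n.choose k : ℝ) / ((k : ℝ) + 1)) * (-1 : ℝ) ^ k := by ring
          _ = (((n + 1).choose (k + 1) : ℝ) / ((n : ℝ) + 1)) * (-1 : ℝ) ^ k := by rw [key]
          _ = ((n + 1).choose (k + 1) : ℝ) * (-1 : ℝ) ^ k / ((n : ℝ) + 1) := by ring
      rw [Finset.sum_congr rfl this]
      have : ∑ k ∈ Finset.range (n+1), ((n + 1).choose (k + 1) : ℝ) * (-1 : ℝ) ^ k / ((n : ℝ) + 1)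
          = (∑ k ∈ Finset.range (n+1), ((n + 1).choose (k + 1) : ℝ) * (-1 : ℝ) ^ k) / ((n : ℝ) + 1) := by
        rw [Finset.sum_div]
      rw [this, alt_sum]
    rw [split, s1, s2, H_range, H_range, Finset.sum_range_succ]
    push_cast
    ring

lemma lemA (n : ℕ) :
    ∑ k ∈ Finset.range n, (n.choose (k + 1) : ℝ) * (-1 : ℝ) ^ k / ((k : ℝ) + 1) ^ 2
      = ((H 1 n) ^ 2 + H 2 n) / 2 := by
  induction n with
  | zero => simp [H]
  | succ n ih =>
    have pascal : ∀ k, ((n+1).choose (k+1) : ℝ) = (n.choose k : ℝ) + (n.choose (k+1) : ℝ) := by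
      intro k; rw [Nat.choose_succ_succ]; push_cast; ring
    have split : ∑ k ∈ Finset.range (n+1), ((n+1).choose (k + 1) : ℝ) * (-1 : ℝ) ^ k / ((k : ℝ) + 1) ^ 2
        = (∑ k ∈ Finset.range (n+1), (n.choose k : ℝ) * (-1 : ℝ) ^ k / ((k : ℝ) + 1) ^ 2)
        + ∑ k ∈ Finset.range (n+1), (n.choose (k+1) : ℝ) * (-1 : ℝ) ^ k / ((k : ℝ) + 1) ^ 2 := by
      rw [← Finset.sum_add_distrib]
      exact Finset.sum_congr rfl fun k _ => by rw [pascal k]; ring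
    have s2 : ∑ k ∈ Finset.range (n+1), (n.choose (k+1) : ℝ) * (-1 : ℝ) ^ k / ((k : ℝ) + 1) ^ 2
        = ((H 1 n) ^ 2 + H 2 n) / 2 := by
      rw [Finset.sum_range_succ, Nat.choose_succ_self]
      simpa using ih
    have s1 : ∑ k ∈ Finset.range (n+1), (n.choose k : ℝ) * (-1 : ℝ) ^ k / ((k : ℝ) + 1) ^ 2
        = H 1 (n+1) / ((n : ℝ) + 1) := by
      have step : ∀ k ∈ Finset.range (n+1), (n.choose k : ℝ) * (-1 : ℝ) ^ k / ((k : ℝ) + 1) ^ 2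
          = (((n + 1).choose (k + 1) : ℝ) * (-1 : ℝ) ^ k / ((k : ℝ) + 1)) / ((n : ℝ) + 1) := by
        intro k _
        have hk0 : ((k : ℝ) + 1) ≠ 0 := by positivity
        calc (n.choose k : ℝ) * (-1 : ℝ) ^ k / ((k : ℝ) + 1) ^ 2
            = ((n.choose k : ℝ) / ((k : ℝ) + 1)) * ((-1 : ℝ) ^ k / ((k : ℝ) + 1)) := by
              rw [div_mul_div_comm, pow_two]
          _ = (((n + 1).choose (k + 1) : ℝ) / ((n : ℝ) + 1)) * ((-1 : ℝ) ^ k / ((k : ℝ) + 1)) := by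
              rw [key]
          _ = (((n + 1).choose (k + 1) : ℝ) * (-1 : ℝ) ^ k / ((k : ℝ) + 1)) / ((n : ℝ) + 1) := by
              ring
      rw [Finset.sum_congr rfl step, ← Finset.sum_div]
      have hb := lemB (n + 1)
      rw [hb]
    rw [split, s1, s2]
    have h1 : H 1 (n + 1) = H 1 n + 1 / ((n : ℝ) + 1) := by
      rw [H_range, H_range, Finset.sum_range_succ]
      simp [pow_one]
    have h2 : H 2 (n + 1) = H 2 n + 1 / ((n : ℝ) + 1) ^ 2 := by
      rw [H_range, H_range, Finset.sum_range_succ]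
    rw [h1, h2]
    have hn : ((n : ℝ) + 1) ≠ 0 := by positivity
    field_simp
    ring

theorem stmt_3 (j : ℕ) (hj : 1 ≤ j) :
    (∑ m ∈ Finset.Icc 1 j, (Nat.choose j m : ℝ) * (-1 : ℝ) ^ (j - m) / (m : ℝ) ^ 2)
      = (-1 : ℝ) ^ (j - 1) * ((H 1 j) ^ 2 + H 2 j) / 2 ∧
    S 2 j = (-1 : ℝ) ^ (j - 1) * ((H 1 j) ^ 2 + H 2 j) / (2 * (Nat.factorial j : ℝ)) := by
  have main : (∑ m ∈ Finset.Icc 1 j, (Nat.choose j m : ℝ) * (-1 : ℝ) ^ (j - m) / (m : ℝ) ^ 2)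
      = (-1 : ℝ) ^ (j - 1) * ((H 1 j) ^ 2 + H 2 j) / 2 := by
    rw [icc_to_range]
    have congr1 : ∀ k ∈ Finset.range j,
        ((j.choose (k+1) : ℝ)) * (-1 : ℝ) ^ (j - (k+1)) / ((k+1 : ℕ) : ℝ) ^ 2
        = (-1 : ℝ) ^ (j - 1) * ((j.choose (k+1) : ℝ) * (-1 : ℝ) ^ k / ((k : ℝ) + 1) ^ 2) := by
      intro k hk
      have hkj : k < j := Finset.mem_range.mp hk
      have hsum : (j - (k+1)) + k = j - 1 := by omega
      have hsgn : (-1 : ℝ) ^ (j - (k+1)) * (-1 : ℝ) ^ k = (-1 : ℝ) ^ (j - 1) := by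
        rw [← pow_add, hsum]
      have hk2 : (-1 : ℝ) ^ k * (-1 : ℝ) ^ k = 1 := by
        rw [← pow_add, ← two_mul, pow_mul]; norm_num
      have : (-1 : ℝ) ^ (j - (k+1)) = (-1 : ℝ) ^ (j - 1) * (-1 : ℝ) ^ k := by
        calc (-1 : ℝ) ^ (j - (k+1)) = (-1 : ℝ) ^ (j - (k+1)) * ((-1 : ℝ) ^ k * (-1 : ℝ) ^ k) := by
              rw [hk2, mul_one]
          _ = ((-1 : ℝ) ^ (j - (k+1)) * (-1 : ℝ) ^ k) * (-1 : ℝ) ^ k := by ring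
          _ = (-1 : ℝ) ^ (j - 1) * (-1 : ℝ) ^ k := by rw [hsgn]
      rw [this]
      push_cast
      ring
    rw [Finset.sum_congr rfl congr1, ← Finset.mul_sum, lemA j]
    ring
  refine ⟨main, ?_⟩
  rw [S, main]
  ring
end

section
/- For every integer j ≥ 1, Σ_{m=1}^{j} C(j, m) · (−1)^{j−m} / m³ = (−1)^{j−1} · (H_j³ + 3·H_j·H_j^{(2)} + 2·H_j^{(3)}) / 6; equivalently, S(3, j) = (−1)^{j−1} · (H_j³ + 3·H_j·H_j^{(2)} + 2·H_j^{(3)}) / (6 · j!). -/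
/-!
Put `T k j = Σ_{m=1}^{j} C(j,m) (-1)^(m-1) / m^k` (`altChooseSum`, summed over `i = m - 1`).
Pascal's rule together with the absorption identity `C(j,m-1) / m = C(j+1,m) / (j+1)` gives
`T (k+1) (j+1) = T (k+1) j + T k (j+1) / (j+1)`, and `T 0 j = 1` for `j ≥ 1`. Starting from
`T 0`, induction on `j` yields `T 1 = H₁`, `T 2 = (H₁² + H₂) / 2` and
`T 3 = (H₁³ + 3 H₁ H₂ + 2 H₃) / 6`. The sum of the theorem is `(-1)^(j-1) T 3 j`, since
`(-1)^(j-m) = (-1)^(j-1) (-1)^(m-1)`.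
-/

open Finset

noncomputable def altChooseSum (k j : ℕ) : ℝ :=
  ∑ i ∈ range j, (j.choose (i + 1) : ℝ) * (-1) ^ i / ((i : ℝ) + 1) ^ k

@[simp]
lemma altChooseSum_zero_right (k : ℕ) : altChooseSum k 0 = 0 := by
  simp [altChooseSum]

lemma altChooseSum_zero_left {j : ℕ} (hj : j ≠ 0) : altChooseSum 0 j = 1 := by
  have h : ∑ i ∈ range (j + 1), (-1 : ℝ) ^ i * j.choose i = 0 := by
    exact_mod_cast Int.alternating_sum_range_choose_of_ne hj
  rw [sum_range_succ'] at h
  have hneg : altChooseSum 0 j = -∑ i ∈ range j, (-1 : ℝ) ^ (i + 1) * j.choose (i + 1) := by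
    rw [altChooseSum, ← sum_neg_distrib]
    exact sum_congr rfl fun i _ => by ring
  simp only [pow_zero, Nat.choose_zero_right, Nat.cast_one, one_mul] at h
  linarith

lemma altChooseSum_succ_succ (k j : ℕ) :
    altChooseSum (k + 1) (j + 1) = altChooseSum (k + 1) j + altChooseSum k (j + 1) / (j + 1) := by
  have pascal : altChooseSum (k + 1) (j + 1) =
      ∑ i ∈ range (j + 1), (j.choose i : ℝ) * (-1) ^ i / ((i : ℝ) + 1) ^ (k + 1) +
        altChooseSum (k + 1) j := by
    simp only [altChooseSum, Nat.choose_succ_succ, Nat.cast_add, add_mul, add_div, sum_add_distrib]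
    rw [sum_range_succ (fun i => (j.choose (i + 1) : ℝ) * _ / _) j, Nat.choose_succ_self]
    simp
  have absorption : ∀ i ∈ range (j + 1),
      (j.choose i : ℝ) * (-1) ^ i / ((i : ℝ) + 1) ^ (k + 1) =
        (j + 1).choose (i + 1) * (-1) ^ i / ((i : ℝ) + 1) ^ k / (j + 1) := by
    intro i _
    have h : ((j : ℝ) + 1) * j.choose i = (j + 1).choose (i + 1) * ((i : ℝ) + 1) := by
      exact_mod_cast Nat.add_one_mul_choose_eq j i
    generalize (-1 : ℝ) ^ i = s
    field_simp
    linear_combination ((i : ℝ) + 1) ^ k * s * h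
  rw [pascal, sum_congr rfl absorption, ← sum_div, add_comm]
  rfl

lemma H_succ (r j : ℕ) : H r (j + 1) = H r j + 1 / ((j : ℝ) + 1) ^ r := by
  rw [H, sum_Icc_succ_top (Nat.le_add_left 1 j), ← H]
  push_cast
  rfl

lemma altChooseSum_one (j : ℕ) : altChooseSum 1 j = H 1 j := by
  induction j with
  | zero => simp [H]
  | succ n ih =>
    rw [altChooseSum_succ_succ, altChooseSum_zero_left n.succ_ne_zero, ih, H_succ]
    ring

lemma altChooseSum_two (j : ℕ) : altChooseSum 2 j = (H 1 j ^ 2 + H 2 j) / 2 := by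
  induction j with
  | zero => simp [H]
  | succ n ih =>
    rw [altChooseSum_succ_succ, altChooseSum_one, ih, H_succ, H_succ]
    field_simp
    ring

lemma altChooseSum_three (j : ℕ) :
    altChooseSum 3 j = (H 1 j ^ 3 + 3 * H 1 j * H 2 j + 2 * H 3 j) / 6 := by
  induction j with
  | zero => simp [H]
  | succ n ih =>
    rw [altChooseSum_succ_succ, altChooseSum_two, ih, H_succ, H_succ, H_succ]
    field_simp
    ring

lemma sum_choose_neg_one_pow_sub_div_pow (k j : ℕ) :
    ∑ m ∈ Icc 1 j, (j.choose m : ℝ) * (-1) ^ (j - m) / (m : ℝ) ^ k =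
      (-1) ^ (j - 1) * altChooseSum k j := by
  rw [← Ico_add_one_right_eq_Icc, sum_Ico_eq_sum_range, Nat.add_sub_cancel, altChooseSum,
    mul_sum]
  refine sum_congr rfl fun i hi => ?_
  have hsign : (-1 : ℝ) ^ (j - (i + 1)) = (-1) ^ (j - 1) * (-1) ^ i := by
    have := mem_range.mp hi
    rw [← pow_add, show j - 1 + i = j - (i + 1) + 2 * i by omega, pow_add, pow_mul, neg_one_sq,
      one_pow, mul_one]
  rw [add_comm 1 i, hsign]
  push_cast
  ring

theorem stmt_4_general (j : ℕ) :
    (∑ m ∈ Finset.Icc 1 j, (Nat.choose j m : ℝ) * (-1 : ℝ) ^ (j - m) / (m : ℝ) ^ 3)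
      = (-1 : ℝ) ^ (j - 1) * ((H 1 j) ^ 3 + 3 * H 1 j * H 2 j + 2 * H 3 j) / 6 ∧
    S 3 j = (-1 : ℝ) ^ (j - 1) * ((H 1 j) ^ 3 + 3 * H 1 j * H 2 j + 2 * H 3 j)
      / (6 * (Nat.factorial j : ℝ)) := by
  have hsum : ∑ m ∈ Finset.Icc 1 j, (Nat.choose j m : ℝ) * (-1 : ℝ) ^ (j - m) / (m : ℝ) ^ 3
      = (-1 : ℝ) ^ (j - 1) * ((H 1 j) ^ 3 + 3 * H 1 j * H 2 j + 2 * H 3 j) / 6 := by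
    rw [sum_choose_neg_one_pow_sub_div_pow, altChooseSum_three, mul_div_assoc]
  refine ⟨hsum, ?_⟩
  rw [S, hsum]
  field_simp

theorem stmt_4 (j : ℕ) (hj : 1 ≤ j) :
    (∑ m ∈ Finset.Icc 1 j, (Nat.choose j m : ℝ) * (-1 : ℝ) ^ (j - m) / (m : ℝ) ^ 3)
      = (-1 : ℝ) ^ (j - 1) * ((H 1 j) ^ 3 + 3 * H 1 j * H 2 j + 2 * H 3 j) / 6 ∧
    S 3 j = (-1 : ℝ) ^ (j - 1) * ((H 1 j) ^ 3 + 3 * H 1 j * H 2 j + 2 * H 3 j)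
      / (6 * (Nat.factorial j : ℝ)) :=
  stmt_4_general j
end

section
/- For all integers k ≥ 1 and j ≥ 1, the generalized transformation coefficients satisfy the harmonic-number-based recurrence k · S(k, j) = Σ_{m=1}^{k} H_j^{(m)} · S(k−m, j). -/
/-!
Put `x_i = 1 / i`. Up to the factor `(-1)^(j-1) / j!`, `S(·, j)` is the sequence of complete
homogeneous symmetric polynomials `h_k(x_1, …, x_j)`, and `H_j^{(m)}` is the power sum
`p_m(x_1, …, x_j)`; the claim is Newton's identity `k h_k = Σ_{m=1}^k p_m h_{k-m}`.
It is proved by adjoining one variable at a time, directly on `S`: adjoining `y = 1/(j+1)`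
adds `y^m` to the power sums and is governed by `(j+1) S(k+1, j+1) = S(k, j+1) - S(k+1, j)`,
and Newton's recurrence survives any step of this shape.
-/

open Finset

theorem Finset.sum_Icc_one_eq_sum_range {M : Type*} [AddCommMonoid M] (f : ℕ → M) (n : ℕ) :
    ∑ m ∈ Icc 1 n, f m = ∑ m ∈ range n, f (m + 1) := by
  induction n with
  | zero => simp
  | succ n ih => rw [sum_Icc_succ_top (by omega), ih, sum_range_succ]

def NewtonRecurrence {R : Type*} [CommRing R] (p u : ℕ → R) : Prop :=
  ∀ k : ℕ, (k : R) * u k = ∑ m ∈ Icc 1 k, p m * u (k - m)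

theorem NewtonRecurrence.succ {R : Type*} [CommRing R] {p q u v : ℕ → R} {a y : R}
    (hu : NewtonRecurrence p u) (hq : ∀ m, q m = p m + y ^ m) (hv0 : v 0 = a * u 0)
    (hv : ∀ k, v (k + 1) = a * u (k + 1) + y * v k) : NewtonRecurrence q v := by
  intro k
  induction k with
  | zero => simp
  | succ k ih =>
    have hp : ∑ m ∈ Icc 1 (k + 1), p m * v (k + 1 - m)
        = a * ∑ m ∈ Icc 1 (k + 1), p m * u (k + 1 - m) + y * ∑ m ∈ Icc 1 k, p m * v (k - m) := by
      rw [sum_Icc_succ_top (by omega), sum_Icc_succ_top (by omega), Nat.sub_self, hv0, mul_add,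
        mul_sum, mul_sum, add_right_comm, ← sum_add_distrib]
      congr 1
      · refine sum_congr rfl fun m hm => ?_
        rw [Nat.sub_add_comm (mem_Icc.mp hm).2, hv]
        ring
      · ring
    have hy : ∑ m ∈ Icc 1 (k + 1), y ^ m * v (k + 1 - m)
        = y * v k + y * ∑ m ∈ Icc 1 k, y ^ m * v (k - m) := by
      rw [sum_Icc_one_eq_sum_range, sum_Icc_one_eq_sum_range, sum_range_succ', mul_sum, add_comm]
      congr 1
      · simp
      · refine sum_congr rfl fun m _ => ?_
        rw [show k + 1 - (m + 1 + 1) = k - (m + 1) by omega]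
        ring
    have hq_split : ∀ n, ∑ m ∈ Icc 1 n, q m * v (n - m)
        = ∑ m ∈ Icc 1 n, p m * v (n - m) + ∑ m ∈ Icc 1 n, y ^ m * v (n - m) := fun n => by
      rw [← sum_add_distrib]
      exact sum_congr rfl fun m _ => by rw [hq]; ring
    rw [hq_split, hp, hy, hv, ← hu]
    push_cast
    linear_combination y * ih + y * hq_split k

theorem H_one_right (m : ℕ) : H m 1 = 1 := by
  simp [H]

theorem H_succ_right (m j : ℕ) : H m (j + 1) = H m j + (1 / ((j : ℝ) + 1)) ^ m := by
  rw [H, sum_Icc_succ_top (by omega), ← H]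
  push_cast
  rw [one_div_pow]

theorem S_zero_right (k : ℕ) : S k 0 = 0 := by
  simp [S]

theorem S_one_right (k : ℕ) : S k 1 = 1 := by
  simp [S]

theorem S_zero_left_succ (j : ℕ) : S 0 (j + 1) = (-1) ^ j / ((j + 1).factorial : ℝ) := by
  have hbinom : ∑ m ∈ range (j + 2), (j + 1).choose m * (-1 : ℝ) ^ (j + 1 - m) = 0 := by
    have := add_pow (1 : ℝ) (-1) (j + 1)
    simp only [add_neg_cancel, one_pow, one_mul, ne_eq, Nat.add_eq_zero_iff, one_ne_zero,
      and_false, not_false_eq_true, zero_pow] at this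
    rw [this]
    exact sum_congr rfl fun m _ => mul_comm _ _
  rw [sum_range_succ', ← sum_Icc_one_eq_sum_range
    (fun m => ((j + 1).choose m : ℝ) * (-1) ^ (j + 1 - m))] at hbinom
  simp only [Nat.choose_zero_right, Nat.cast_one, one_mul, Nat.sub_zero] at hbinom
  simp only [S, pow_zero, div_one, eq_neg_of_add_eq_zero_left hbinom, pow_succ]
  ring

theorem succ_mul_S_succ_succ (k j : ℕ) :
    ((j : ℝ) + 1) * S (k + 1) (j + 1) = S k (j + 1) - S (k + 1) j := by
  have hterm : ∀ m ∈ Icc 1 (j + 1),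
      ((j : ℝ) + 1) * ((j + 1).choose m * (-1 : ℝ) ^ (j + 1 - m) / (m : ℝ) ^ (k + 1))
        = (j + 1).choose m * (-1 : ℝ) ^ (j + 1 - m) / (m : ℝ) ^ k
          - ((j : ℝ) + 1) * (j.choose m * (-1 : ℝ) ^ (j - m) / (m : ℝ) ^ (k + 1)) := by
    intro m hm
    obtain ⟨hm1, hmj⟩ := mem_Icc.mp hm
    have hchoose : (j.choose m : ℝ) * (j + 1) = (j + 1).choose m * ((j : ℝ) + 1 - m) := by
      exact_mod_cast Nat.choose_mul_succ_eq j m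
    have hsign : ((j : ℝ) + 1 - m) * ((-1) ^ (j + 1 - m) + (-1) ^ (j - m)) = 0 := by
      rcases hmj.lt_or_eq with hlt | rfl
      · rw [Nat.sub_add_comm (by omega), pow_succ]
        ring
      · push_cast
        ring
    have hm0 : (m : ℝ) ≠ 0 := by positivity
    field_simp
    linear_combination (m : ℝ) ^ k * ((j + 1).choose m * hsign + (-1 : ℝ) ^ (j - m) * hchoose)
  have hsum := sum_congr rfl hterm
  rw [← mul_sum, sum_sub_distrib, ← mul_sum] at hsum
  have hext : ∑ m ∈ Icc 1 j, (j.choose m : ℝ) * (-1) ^ (j - m) / (m : ℝ) ^ (k + 1)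
      = ∑ m ∈ Icc 1 (j + 1), (j.choose m : ℝ) * (-1) ^ (j - m) / (m : ℝ) ^ (k + 1) := by
    rw [sum_Icc_succ_top (by omega), Nat.choose_succ_self]
    simp
  simp only [S, hext, Nat.factorial_succ]
  push_cast
  field_simp
  linear_combination hsum

/-- The induction starts at `j = 1`: the sum defining `S` omits `m = 0`, so `S 0 0 = 0` and the
step from `j = 0` to `j = 1` fails at `k = 0`. -/
theorem newtonRecurrence_H_S (j : ℕ) : NewtonRecurrence (H · (j + 1)) (S · (j + 1)) := by
  induction j with
  | zero => intro k; simp [H_one_right, S_one_right]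
  | succ j ih =>
    have hj : ((j : ℝ) + 1 + 1) ≠ 0 := by positivity
    refine ih.succ (a := -1 / ((j : ℝ) + 1 + 1)) (y := 1 / ((j : ℝ) + 1 + 1)) (fun m => ?_) ?_
      fun k => ?_
    · rw [H_succ_right]
      push_cast
      rfl
    · simp only [S_zero_left_succ, Nat.factorial_succ (j + 1), pow_succ]
      push_cast
      field_simp
    · have hrec := succ_mul_S_succ_succ k (j + 1)
      push_cast at hrec
      field_simp
      linear_combination hrec

theorem stmt_6_general (k j : ℕ) :
    (k : ℝ) * S k j = ∑ m ∈ Finset.Icc 1 k, H m j * S (k - m) j := by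
  rcases j with _ | j
  · simp [S_zero_right]
  · exact newtonRecurrence_H_S j k

theorem stmt_6 (k j : ℕ) (hk : 1 ≤ k) (hj : 1 ≤ j) :
    (k : ℝ) * S k j = ∑ m ∈ Finset.Icc 1 k, H m j * S (k - m) j :=
  stmt_6_general k j
end

section
/- For all integers k ≥ 1 and j ≥ 1, the generalized transformation coefficients satisfy S(k, j) = (j+1) · Σ_{i=0}^{j−1} (−1)^{j−1−i} · H_{i+1}^{(k)} / ((j−1−i)! · (i+2)!). -/
open Finset Nat

section
variable {K : Type*} [Field K] [CharZero K]

theorem sum_range_neg_one_pow_div_factorial_mul_factorial {n d : ℕ} (hd : d ≤ n + 1) :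
    ∑ t ∈ range (d + 1), (-1 : K) ^ t / (t ! * (n + 1 - t)! : K)
      = (-1) ^ d * n.choose d / (n + 1)! := by
  have hsum : ∑ t ∈ range (d + 1), ((-1) ^ t * (n + 1).choose t : K)
      = (-1) ^ d * n.choose d := by
    exact_mod_cast Int.alternating_sum_range_choose_eq_choose
  rw [← hsum, sum_div]
  refine sum_congr rfl fun t ht => ?_
  rw [cast_choose K (by grind), mul_div_assoc,
    div_div_cancel_left' (by exact_mod_cast factorial_ne_zero _)]
  ring

theorem sum_Ico_neg_one_pow_div_factorial_mul_factorial {j m : ℕ} (hm : 1 ≤ m) (hmj : m ≤ j) :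
    ∑ i ∈ Ico (m - 1) j, (-1 : K) ^ (j - 1 - i) / ((j - 1 - i)! * (i + 2)! : K)
      = (-1) ^ (j - m) * j.choose m / (j + 1)! := by
  set g : ℕ → K := fun t => (-1) ^ t / (t ! * (j + 1 - t)! : K)
  have hterm : ∀ i ∈ Ico (m - 1) j,
      (-1 : K) ^ (j - 1 - i) / ((j - 1 - i)! * (i + 2)! : K) = g (j - 1 - i) := by
    intro i hi
    simp only [g, show j + 1 - (j - 1 - i) = i + 2 by grind]
  rw [sum_congr rfl hterm, sum_Ico_reflect g _ (by omega), show j - 1 + 1 - j = 0 by omega,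
    show j - 1 + 1 - (m - 1) = j - m + 1 by omega, Nat.Ico_zero_eq_range,
    sum_range_neg_one_pow_div_factorial_mul_factorial (by omega),
    choose_symm hmj]

end

theorem stmt_7_general (k j : ℕ) :
    S k j = ((j : ℝ) + 1) *
      ∑ i ∈ Finset.range j, (-1 : ℝ) ^ (j - 1 - i) * H k (i + 1)
        / ((Nat.factorial (j - 1 - i) : ℝ) * (Nat.factorial (i + 2) : ℝ)) := by
  have hswap : ∑ i ∈ range j, (-1 : ℝ) ^ (j - 1 - i) * H k (i + 1) / ((j - 1 - i)! * (i + 2)! : ℝ)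
      = ∑ m ∈ Icc 1 j, (∑ i ∈ Ico (m - 1) j, (-1 : ℝ) ^ (j - 1 - i) / ((j - 1 - i)! * (i + 2)! : ℝ))
          / (m : ℝ) ^ k := by
    simp only [H, mul_sum, sum_div]
    rw [sum_comm' (t' := Icc 1 j) (s' := fun m => Ico (m - 1) j) (by grind)]
    exact sum_congr rfl fun m _ => sum_congr rfl fun i _ => by ring
  rw [S, hswap, mul_sum, mul_sum]
  refine sum_congr rfl fun m hm => ?_
  rw [mem_Icc] at hm
  rw [sum_Ico_neg_one_pow_div_factorial_mul_factorial hm.1 hm.2, factorial_succ]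
  push_cast
  field_simp

theorem stmt_7 (k j : ℕ) (hk : 1 ≤ k) (hj : 1 ≤ j) :
    S k j = ((j : ℝ) + 1) *
      ∑ i ∈ Finset.range j, (-1 : ℝ) ^ (j - 1 - i) * H k (i + 1)
        / ((Nat.factorial (j - 1 - i) : ℝ) * (Nat.factorial (i + 2) : ℝ)) :=
  stmt_7_general k j
end

section
/- For every integer k ≥ 1, every real number r ≥ 0, and every integer j ≥ 1, the generalized transformation coefficients satisfy S(k, j) = Σ_{i=0}^{j−1} (−1)^{j−1−i} · H_{i+1}^{(k−r)} / ((j−1−i)! · (i+1)!) · ( 1/(i+1)^r + (j−1−i)/(i+2)^{r+1} ). -/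
/-- The real-order harmonic number `Hr s n = Σ_{m=1}^{n} m^{−s}` (real power). -/
noncomputable def Hr (s : ℝ) (n : ℕ) : ℝ :=
  ∑ m ∈ Finset.Icc 1 n, (m : ℝ) ^ (-s)

noncomputable def Gaux (r : ℝ) (j i : ℕ) : ℝ :=
  (-1 : ℝ) ^ (j - 1 - i) * ((i : ℝ) + 1) ^ (-r)
    / ((Nat.factorial (j - 1 - i) : ℝ) * (Nat.factorial (i + 1) : ℝ))

noncomputable def Taux (r : ℝ) (j i : ℕ) : ℝ :=
  (-1 : ℝ) ^ (j - 1 - i)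
    / ((Nat.factorial (j - 1 - i) : ℝ) * (Nat.factorial (i + 1) : ℝ))
    * (1 / ((i : ℝ) + 1) ^ r + ((j - 1 - i : ℕ) : ℝ) / ((i : ℝ) + 2) ^ (r + 1))

lemma Taux_top (r : ℝ) (j : ℕ) (hj : 1 ≤ j) : Taux r j (j - 1) = Gaux r j (j - 1) := by
  have h0 : j - 1 - (j - 1) = 0 := by omega
  have hx : (0 : ℝ) < ((j - 1 : ℕ) : ℝ) + 1 := by positivity
  simp only [Taux, Gaux, h0, Nat.cast_zero, Nat.factorial_zero, Nat.cast_one, pow_zero,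
    zero_div, add_zero]
  rw [Real.rpow_neg hx.le, one_div]
  ring

lemma Taux_step (r : ℝ) (j i : ℕ) (h : i + 2 ≤ j) :
    Taux r j i = Gaux r j i - Gaux r j (i + 1) := by
  have h1 : j - 1 - i = (j - 2 - i) + 1 := by omega
  have h2 : j - 1 - (i + 1) = j - 2 - i := by omega
  set e := j - 2 - i with he
  have hx : (0 : ℝ) < (i : ℝ) + 1 := by positivity
  have hy : (0 : ℝ) < (i : ℝ) + 2 := by positivity
  have hP : (0 : ℝ) < ((i : ℝ) + 1) ^ r := Real.rpow_pos_of_pos hx r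
  have hQ : (0 : ℝ) < ((i : ℝ) + 2) ^ r := Real.rpow_pos_of_pos hy r
  have hF1 : (0 : ℝ) < (Nat.factorial e : ℝ) := by positivity
  have hF2 : (0 : ℝ) < (Nat.factorial (i + 1) : ℝ) := by positivity
  simp only [Taux, Gaux, h1, h2, Nat.factorial_succ]
  push_cast
  rw [show ((i : ℝ) + 1 + 1) = (i : ℝ) + 2 by ring]
  rw [Real.rpow_add_one hy.ne', Real.rpow_neg hx.le, Real.rpow_neg hy.le]
  rw [pow_succ]
  field_simp
  ring

lemma tele (r : ℝ) (j : ℕ) (hj : 1 ≤ j) :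
    ∀ n a, a + n = j - 1 →
      ∑ i ∈ Finset.Icc a (j - 1), Taux r j i = Gaux r j a := by
  intro n
  induction n with
  | zero =>
    intro a ha
    have : a = j - 1 := by omega
    subst this
    rw [Finset.Icc_self, Finset.sum_singleton, Taux_top r j hj]
  | succ n ih =>
    intro a ha
    have hins : Finset.Icc a (j - 1) = insert a (Finset.Icc (a + 1) (j - 1)) := by
      ext x; simp only [Finset.mem_Icc, Finset.mem_insert]; omega
    rw [hins, Finset.sum_insert (by simp), ih (a + 1) (by omega),
      Taux_step r j a (by omega)]
    ring

theorem stmt_8 (k : ℕ) (r : ℝ) (j : ℕ) (hk : 1 ≤ k) (hr : 0 ≤ r) (hj : 1 ≤ j) :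
    S k j = ∑ i ∈ Finset.range j,
      (-1 : ℝ) ^ (j - 1 - i) * Hr ((k : ℝ) - r) (i + 1)
        / ((Nat.factorial (j - 1 - i) : ℝ) * (Nat.factorial (i + 1) : ℝ))
        * (1 / ((i : ℝ) + 1) ^ r + ((j - 1 - i : ℕ) : ℝ) / ((i : ℝ) + 2) ^ (r + 1)) := by
  have step1 : ∀ i ∈ Finset.range j,
      (-1 : ℝ) ^ (j - 1 - i) * Hr ((k : ℝ) - r) (i + 1)
        / ((Nat.factorial (j - 1 - i) : ℝ) * (Nat.factorial (i + 1) : ℝ))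
        * (1 / ((i : ℝ) + 1) ^ r + ((j - 1 - i : ℕ) : ℝ) / ((i : ℝ) + 2) ^ (r + 1))
      = ∑ m ∈ Finset.Icc 1 (i + 1), (m : ℝ) ^ (r - (k : ℝ)) * Taux r j i := by
    intro i _
    rw [Hr, show -((k : ℝ) - r) = r - (k : ℝ) by ring, Finset.mul_sum,
      Finset.sum_div, Finset.sum_mul]
    simp only [Taux]
    apply Finset.sum_congr rfl
    intro m _
    ring
  rw [Finset.sum_congr rfl step1]
  rw [Finset.sum_comm' (s := Finset.range j) (t := fun i => Finset.Icc 1 (i + 1))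
    (t' := Finset.Icc 1 j) (s' := fun m => Finset.Icc (m - 1) (j - 1))
    (by intro i m; simp only [Finset.mem_range, Finset.mem_Icc]; omega)]
  have step2 : ∀ m ∈ Finset.Icc 1 j,
      ∑ i ∈ Finset.Icc (m - 1) (j - 1), (m : ℝ) ^ (r - (k : ℝ)) * Taux r j i
      = 1 / (Nat.factorial j : ℝ) *
          ((Nat.choose j m : ℝ) * (-1 : ℝ) ^ (j - m) / (m : ℝ) ^ k) := by
    intro m hm
    simp only [Finset.mem_Icc] at hm
    rw [← Finset.mul_sum, tele r j hj (j - m) (m - 1) (by omega)]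
    have h1 : j - 1 - (m - 1) = j - m := by omega
    have h2 : (m - 1) + 1 = m := by omega
    have h3 : ((m - 1 : ℕ) : ℝ) + 1 = (m : ℝ) := by
      have : ((m - 1 : ℕ) : ℝ) = (m : ℝ) - 1 := by
        rw [Nat.cast_sub hm.1]; norm_num
      rw [this]; ring
    have hmpos : (0 : ℝ) < (m : ℝ) := by exact_mod_cast hm.1
    rw [Gaux, h1, h2, h3]
    have hpow : (m : ℝ) ^ (r - (k : ℝ)) * (m : ℝ) ^ (-r) = ((m : ℝ) ^ k)⁻¹ := by
      rw [← Real.rpow_add hmpos]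
      rw [show r - (k : ℝ) + -r = -(k : ℝ) by ring]
      rw [Real.rpow_neg hmpos.le, Real.rpow_natCast]
    have hchoose : (Nat.choose j m : ℝ) * (Nat.factorial m : ℝ) *
        (Nat.factorial (j - m) : ℝ) = (Nat.factorial j : ℝ) := by
      exact_mod_cast congrArg Nat.cast (Nat.choose_mul_factorial_mul_factorial hm.2)
    have hfj : (0 : ℝ) < (Nat.factorial j : ℝ) := by positivity
    have hfm : (0 : ℝ) < (Nat.factorial m : ℝ) := by positivity
    have hfjm : (0 : ℝ) < (Nat.factorial (j - m) : ℝ) := by positivity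
    have hmk : (0 : ℝ) < (m : ℝ) ^ k := by positivity
    rw [show (m : ℝ) ^ (r - (k : ℝ)) *
        ((-1 : ℝ) ^ (j - m) * (m : ℝ) ^ (-r) /
          ((Nat.factorial (j - m) : ℝ) * (Nat.factorial m : ℝ)))
      = ((m : ℝ) ^ (r - (k : ℝ)) * (m : ℝ) ^ (-r)) * (-1 : ℝ) ^ (j - m) /
          ((Nat.factorial (j - m) : ℝ) * (Nat.factorial m : ℝ)) by ring, hpow]
    rw [← hchoose]
    have hC : (0 : ℝ) < (Nat.choose j m : ℝ) := by
      exact_mod_cast Nat.choose_pos hm.2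
    field_simp
  rw [Finset.sum_congr rfl step2, S, Finset.mul_sum]
end

section
/- For all integers k ≥ 0 and j ≥ 1, the generalized transformation coefficients and the exponential harmonic numbers are related by S(k, j) / j = Σ_{m=1}^{j} (H_m^{(k+1)} / m!) · (−1)^{j−m} / (j−m)!. -/
/-!
Expanding `H_m^{(k+1)}` and exchanging the two summations, the coefficient of `i^{-(k+1)}` on the
right-hand side is `Σ_{m=i}^{j} (-1)^{j-m} / (m! (j-m)!)`, a tail of the alternating `j`-th row of
Pascal's triangle divided by `j!`. By Pascal's rule this tail telescopes to
`(-1)^{j-i} C(j-1, i-1) / j!`, and `j · C(j-1, i-1) = i · C(j, i)` turns it into the coefficient of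
`i^{-(k+1)}` in `S k j / j`.
-/

open Finset Nat

theorem Finset.sum_Icc_Icc_comm {M : Type*} [AddCommMonoid M] (a b : ℕ) (f : ℕ → ℕ → M) :
    ∑ m ∈ Icc a b, ∑ i ∈ Icc a m, f i m = ∑ i ∈ Icc a b, ∑ m ∈ Icc i b, f i m := by
  simp only [← Ico_add_one_right_eq_Icc]
  exact (sum_Ico_Ico_comm a (b + 1) f).symm

theorem Nat.mul_choose_sub_one_sub_one {i : ℕ} (hi : 1 ≤ i) (j : ℕ) :
    j * (j - 1).choose (i - 1) = j.choose i * i := by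
  obtain ⟨l, rfl⟩ := Nat.exists_eq_add_of_le' hi
  cases j with
  | zero => simp
  | succ n => simpa using add_one_mul_choose_eq n l

theorem sum_Icc_add_one_neg_one_pow_mul_choose {R : Type*} [CommRing R] {n i : ℕ} (hi : i ≤ n) :
    ∑ m ∈ Icc (i + 1) (n + 1), (-1 : R) ^ (n + 1 - m) * ((n + 1).choose m : R) =
      (-1) ^ (n - i) * (n.choose i : R) := by
  induction hi using Nat.decreasingInduction with
  | self => simp
  | of_succ i hin ih =>
    rw [← insert_Icc_add_one_left_eq_Icc (by omega), sum_insert (by simp), ih, choose_succ_succ',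
      show n + 1 - (i + 1) = n - i by omega, show n - i = (n - (i + 1)) + 1 by omega]
    push_cast
    ring

theorem sum_Icc_neg_one_pow_mul_choose {R : Type*} [CommRing R] {i j : ℕ} (hi : 1 ≤ i)
    (hij : i ≤ j) :
    ∑ m ∈ Icc i j, (-1 : R) ^ (j - m) * (j.choose m : R) =
      (-1) ^ (j - i) * ((j - 1).choose (i - 1) : R) := by
  obtain ⟨l, rfl⟩ := Nat.exists_eq_add_of_le' hi
  obtain ⟨n, rfl⟩ := Nat.exists_eq_add_of_le' (hi.trans hij)
  simpa using sum_Icc_add_one_neg_one_pow_mul_choose (R := R) (by omega : l ≤ n)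

theorem sum_Icc_neg_one_pow_div_factorial_mul_factorial {K : Type*} [Field K] [CharZero K]
    {i j : ℕ} (hi : 1 ≤ i) (hij : i ≤ j) :
    ∑ m ∈ Icc i j, (-1 : K) ^ (j - m) / ((m ! : K) * (j - m)!) =
      (-1) ^ (j - i) * ((j - 1).choose (i - 1) : K) / j ! := by
  rw [← sum_Icc_neg_one_pow_mul_choose hi hij, sum_div]
  refine sum_congr rfl fun m hm => ?_
  have := j.factorial_ne_zero
  rw [cast_choose K (mem_Icc.1 hm).2]
  field_simp

theorem stmt_9_general (k j : ℕ) :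
    S k j / (j : ℝ) = ∑ m ∈ Finset.Icc 1 j,
      (H (k + 1) m / (Nat.factorial m : ℝ)) * (-1 : ℝ) ^ (j - m)
        / (Nat.factorial (j - m) : ℝ) := by
  calc S k j / j
      = ∑ i ∈ Icc 1 j, 1 / (i : ℝ) ^ (k + 1) *
          ∑ m ∈ Icc i j, (-1 : ℝ) ^ (j - m) / ((m ! : ℝ) * (j - m)!) := by
        rw [S, mul_sum, sum_div]
        refine sum_congr rfl fun i hi => ?_
        obtain ⟨hi, hij⟩ := mem_Icc.1 hi
        rw [sum_Icc_neg_one_pow_div_factorial_mul_factorial hi hij]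
        have hchoose : (j : ℝ) * ((j - 1).choose (i - 1) : ℕ) = (j.choose i : ℕ) * i := by
          exact_mod_cast Nat.mul_choose_sub_one_sub_one hi j
        have := j.factorial_ne_zero
        have : (i : ℝ) ≠ 0 := Nat.cast_ne_zero.2 (by omega)
        have : (j : ℝ) ≠ 0 := Nat.cast_ne_zero.2 (by omega)
        field_simp
        linear_combination -(i : ℝ) ^ k * hchoose
    _ = _ := by
        simp only [H, mul_sum, sum_mul, sum_div]
        rw [sum_Icc_Icc_comm]
        refine sum_congr rfl fun i _ => sum_congr rfl fun m _ => ?_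
        ring

theorem stmt_9 (k j : ℕ) (hj : 1 ≤ j) :
    S k j / (j : ℝ) = ∑ m ∈ Finset.Icc 1 j,
      (H (k + 1) m / (Nat.factorial m : ℝ)) * (-1 : ℝ) ^ (j - m)
        / (Nat.factorial (j - m) : ℝ) :=
  stmt_9_general k j
end

section
/- For all integers n ≥ 1 and k ≥ 0, the reciprocal power 1/n^k is given by the finite sum 1/n^k = Σ_{j=1}^{n} S(k, j) · n! / (n−j)!. -/
open Finset

theorem sum_Icc_choose_mul_choose_mul_neg_one_pow {R : Type*} [CommRing R] {m n : ℕ}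
    (hmn : m ≤ n) :
    ∑ j ∈ Icc m n, (n.choose j * j.choose m * (-1) ^ (j - m) : R) = if m = n then 1 else 0 := by
  obtain ⟨d, rfl⟩ := Nat.exists_eq_add_of_le hmn
  have hchoose (i : ℕ) :
      ((m + d).choose (m + i) * (m + i).choose m : R) = (m + d).choose m * d.choose i := by
    have := Nat.choose_mul (n := m + d) (Nat.le_add_right m i)
    simp only [Nat.add_sub_cancel_left] at this
    rw [← Nat.cast_mul, ← Nat.cast_mul, this]
  have halt : ∑ i ∈ range (d + 1), ((-1) ^ i * d.choose i : R) = if d = 0 then 1 else 0 := by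
    have := congrArg (Int.cast : ℤ → R) (Int.alternating_sum_range_choose (n := d))
    push_cast at this
    exact this
  calc ∑ j ∈ Icc m (m + d), ((m + d).choose j * j.choose m * (-1) ^ (j - m) : R)
      = ∑ i ∈ range (d + 1), ((m + d).choose (m + i) * (m + i).choose m * (-1) ^ i : R) := by
        rw [← Ico_add_one_right_eq_Icc, sum_Ico_eq_sum_range, show m + d + 1 - m = d + 1 by omega]
        simp only [Nat.add_sub_cancel_left]
    _ = (m + d).choose m * ∑ i ∈ range (d + 1), ((-1) ^ i * d.choose i : R) := by
        rw [mul_sum]; refine sum_congr rfl fun i _ => ?_; rw [hchoose]; ring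
    _ = if m = m + d then 1 else 0 := by
        rw [halt]; rcases d with _ | d <;> simp

theorem sum_Icc_choose_mul_sum_Icc_choose_mul_neg_one_pow {R : Type*} [CommRing R]
    (f : ℕ → R) {a n : ℕ} (han : a ≤ n) :
    ∑ j ∈ Icc a n, (n.choose j : R) * ∑ m ∈ Icc a j, j.choose m * (-1) ^ (j - m) * f m = f n := by
  calc ∑ j ∈ Icc a n, (n.choose j : R) * ∑ m ∈ Icc a j, j.choose m * (-1) ^ (j - m) * f m
      = ∑ m ∈ Icc a n, (∑ j ∈ Icc m n, (n.choose j * j.choose m * (-1) ^ (j - m) : R)) * f m := by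
        simp only [mul_sum, sum_mul]
        refine sum_comm' (fun j m => ?_) |>.trans (sum_congr rfl fun m _ => sum_congr rfl
          fun j _ => by ring)
        simp only [mem_Icc]; omega
    _ = f n := by
        rw [sum_congr rfl fun m hm => by
          rw [sum_Icc_choose_mul_choose_mul_neg_one_pow (mem_Icc.1 hm).2, ite_mul, one_mul,
            zero_mul]]
        simp [han]

theorem S_mul_factorial_div_factorial {k j n : ℕ} (hjn : j ≤ n) :
    S k j * (n.factorial / (n - j).factorial : ℝ)
      = n.choose j * ∑ m ∈ Icc 1 j, j.choose m * (-1) ^ (j - m) * (1 / (m : ℝ) ^ k) := by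
  rw [Nat.cast_choose ℝ hjn, S]
  simp only [mul_one_div]
  field_simp

theorem stmt_11 (n k : ℕ) (hn : 1 ≤ n) :
    1 / (n : ℝ) ^ k =
      ∑ j ∈ Finset.Icc 1 n, S k j * ((Nat.factorial n : ℝ) / (Nat.factorial (n - j) : ℝ)) := by
  rw [sum_congr rfl fun j hj => S_mul_factorial_div_factorial (mem_Icc.1 hj).2,
    sum_Icc_choose_mul_sum_Icc_choose_mul_neg_one_pow (fun m => 1 / (m : ℝ) ^ k) hn]
end

section
/- For all integers n ≥ 1 and k ≥ 1, the k-order harmonic number satisfies H_n^{(k)} = Σ_{j=1}^{n} C(n+1, j+1) · S(k, j) · j!. -/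
/-! Expanding `S k j · j!` and exchanging the two sums, the coefficient of `1 / m ^ k` on the
right is `∑_{j=m}^{n} (-1)^(j-m) C(n+1, j+1) C(j, m)`. This alternating sum equals `1`, by
induction on `n`: Pascal's rule splits `C(n+2, j+1)` into `C(n+1, j) + C(n+1, j+1)`, the first
part gives `C(n+1, m) ∑_i (-1)^i C(n+1-m, i) = 0`, and the second is the induction hypothesis. -/

open Finset

theorem Int.alternating_sum_Icc_choose_mul_choose {N m : ℕ} (hm : m < N) :
    ∑ j ∈ Icc m N, (-1 : ℤ) ^ (j - m) * (N.choose j * j.choose m) = 0 := by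
  calc ∑ j ∈ Icc m N, (-1 : ℤ) ^ (j - m) * (N.choose j * j.choose m)
      = ∑ j ∈ Icc m N, N.choose m * ((-1 : ℤ) ^ (j - m) * (N - m).choose (j - m)) := by
        refine sum_congr rfl fun j hj => ?_
        have h := Nat.choose_mul (n := N) (mem_Icc.mp hj).1
        rw [← Nat.cast_mul, h]
        push_cast
        ring
    _ = N.choose m * ∑ i ∈ Finset.range (N - m + 1), (-1 : ℤ) ^ i * (N - m).choose i := by
        rw [← mul_sum, ← Ico_add_one_right_eq_Icc, sum_Ico_eq_sum_range,
          Nat.sub_add_comm hm.le]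
        simp only [Nat.add_sub_cancel_left]
    _ = 0 := by rw [Int.alternating_sum_range_choose_of_ne (by omega), mul_zero]

theorem Int.alternating_sum_Icc_choose_succ_mul_choose {n m : ℕ} (hmn : m ≤ n) :
    ∑ j ∈ Icc m n, (-1 : ℤ) ^ (j - m) * ((n + 1).choose (j + 1) * j.choose m) = 1 := by
  induction n, hmn using Nat.le_induction with
  | base => simp
  | succ n hmn ih =>
    have pascal : ∀ j ∈ Icc m (n + 1),
        (-1 : ℤ) ^ (j - m) * ((n + 2).choose (j + 1) * j.choose m) =
          (-1 : ℤ) ^ (j - m) * ((n + 1).choose j * j.choose m) +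
            (-1 : ℤ) ^ (j - m) * ((n + 1).choose (j + 1) * j.choose m) := by
      intro j _
      rw [Nat.choose_succ_succ (n + 1) j]
      push_cast
      ring
    rw [sum_congr rfl pascal, sum_add_distrib,
      alternating_sum_Icc_choose_mul_choose (Nat.lt_succ_of_le hmn), zero_add,
      sum_Icc_succ_top (by omega), ih, Nat.choose_succ_self]
    simp

theorem sum_Icc_eq_sum_choose_mul_alternating_sum {R : Type*} [CommRing R] (f : ℕ → R)
    (n : ℕ) :
    ∑ m ∈ Icc 1 n, f m = ∑ j ∈ Icc 1 n,
      ((n + 1).choose (j + 1) : R) *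
        ∑ m ∈ Icc 1 j, (j.choose m : R) * (-1) ^ (j - m) * f m := by
  simp only [mul_sum]
  rw [sum_comm' (t' := Icc 1 n) (s' := fun m => Icc m n)
    (fun j m => by simp only [mem_Icc]; omega)]
  refine sum_congr rfl fun m hm => ?_
  have h := congrArg (Int.cast (R := R))
    (Int.alternating_sum_Icc_choose_succ_mul_choose (mem_Icc.mp hm).2)
  push_cast at h
  calc f m
      = (∑ j ∈ Icc m n, (-1) ^ (j - m) * ((n + 1).choose (j + 1) * j.choose m : R)) * f m := by
        rw [h, one_mul]
    _ = _ := by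
        rw [sum_mul]
        exact sum_congr rfl fun j _ => by ring

theorem stmt_12_general (n k : ℕ) :
    H k n = ∑ j ∈ Finset.Icc 1 n,
      (Nat.choose (n + 1) (j + 1) : ℝ) * S k j * (Nat.factorial j : ℝ) := by
  have cancel_factorial : ∀ j, (n + 1).choose (j + 1) * S k j * j.factorial =
      ((n + 1).choose (j + 1) : ℝ) *
        ∑ m ∈ Icc 1 j, (j.choose m : ℝ) * (-1) ^ (j - m) * (1 / (m : ℝ) ^ k) := by
    intro j
    rw [S, mul_assoc, one_div_mul_eq_div, div_mul_cancel₀ _ (by positivity)]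
    simp only [mul_one_div]
  rw [H, sum_congr rfl fun j _ => cancel_factorial j]
  exact sum_Icc_eq_sum_choose_mul_alternating_sum _ n

theorem stmt_12 (n k : ℕ) (hn : 1 ≤ n) (hk : 1 ≤ k) :
    H k n = ∑ j ∈ Finset.Icc 1 n,
      (Nat.choose (n + 1) (j + 1) : ℝ) * S k j * (Nat.factorial j : ℝ) :=
  stmt_12_general n k
end

section
/- For all integers k ≥ 1 and j ≥ 1, the generalized transformation coefficients satisfy S(k, j) = (1/j!) · Σ_{i=1}^{j} S(k−1, i) · (−1)^{j−i} · (i−1)!. -/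
/-!
Expanding `S (k-1) i` on the right, the factor `(i-1)!/i!` turns `C(i,m)` into `C(i,m)/i`,
and the signs combine to `(-1)^(j-m)`. After exchanging the two sums, the inner sum is
`∑_{i=m}^{j} C(i,m)/i = C(j,m)/m`, by absorption `C(i,m)/i = C(i-1,m-1)/m` and the hockey-stick
identity; the extra factor `1/m` raises `m^(k-1)` to `m^k`.
-/

open Finset

lemma Nat.sum_Icc_choose_pred {m : ℕ} (hm : 1 ≤ m) (j : ℕ) :
    ∑ i ∈ Icc m j, (i - 1).choose (m - 1) = j.choose m := by
  obtain ⟨m, rfl⟩ : ∃ m', m = m' + 1 := ⟨m - 1, by omega⟩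
  rcases j with _ | j
  · simp
  · rw [← map_add_right_Icc m j 1, sum_map]
    simp [Nat.sum_Icc_choose]

lemma choose_div_self_eq {i m : ℕ} (hi : 1 ≤ i) (hm : 1 ≤ m) :
    (i.choose m : ℝ) / i = (i - 1).choose (m - 1) / m := by
  obtain ⟨i, rfl⟩ : ∃ i', i = i' + 1 := ⟨i - 1, by omega⟩
  obtain ⟨m, rfl⟩ : ∃ m', m = m' + 1 := ⟨m - 1, by omega⟩
  have h : ((i + 1 : ℕ) : ℝ) * i.choose m = (i + 1).choose (m + 1) * (m + 1 : ℕ) := by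
    exact_mod_cast Nat.add_one_mul_choose_eq i m
  simp only [Nat.add_sub_cancel]
  field_simp
  linear_combination -h

lemma sum_Icc_choose_div_self {m : ℕ} (hm : 1 ≤ m) (j : ℕ) :
    ∑ i ∈ Icc m j, (i.choose m : ℝ) / i = j.choose m / m := by
  rw [sum_congr rfl fun i hi => choose_div_self_eq (hm.trans (mem_Icc.1 hi).1) hm,
    ← sum_div, ← Nat.sum_Icc_choose_pred hm j, Nat.cast_sum]

lemma S_mul_sign_mul_factorial_pred (n : ℕ) {i j : ℕ} (hi : 1 ≤ i) (hij : i ≤ j) :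
    S n i * (-1 : ℝ) ^ (j - i) * (i - 1).factorial =
      ∑ m ∈ Icc 1 i, (i.choose m : ℝ) / i * ((-1 : ℝ) ^ (j - m) / (m : ℝ) ^ n) := by
  have hfac : (i.factorial : ℝ) = i * (i - 1).factorial := by
    rw_mod_cast [Nat.mul_factorial_pred (by omega)]
  have hi0 : (i : ℝ) ≠ 0 := by positivity
  have hf0 : ((i - 1).factorial : ℝ) ≠ 0 := by positivity
  rw [S, mul_sum, sum_mul, sum_mul]
  refine sum_congr rfl fun m hm => ?_
  have hsign : (-1 : ℝ) ^ (j - m) = (-1) ^ (i - m) * (-1) ^ (j - i) := by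
    rw [← pow_add]; congr 1; have := (mem_Icc.1 hm).2; omega
  rw [hfac, hsign]
  field_simp

theorem stmt_13_general (k j : ℕ) (hk : 1 ≤ k) :
    S k j = (1 / (Nat.factorial j : ℝ)) *
      ∑ i ∈ Finset.Icc 1 j, S (k - 1) i * (-1 : ℝ) ^ (j - i) * (Nat.factorial (i - 1) : ℝ) := by
  obtain ⟨n, rfl⟩ : ∃ n, k = n + 1 := ⟨k - 1, by omega⟩
  rw [S, Nat.add_sub_cancel]
  congr 1
  symm
  calc ∑ i ∈ Icc 1 j, S n i * (-1 : ℝ) ^ (j - i) * (i - 1).factorial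
      = ∑ i ∈ Icc 1 j, ∑ m ∈ Icc 1 i,
          (i.choose m : ℝ) / i * ((-1 : ℝ) ^ (j - m) / (m : ℝ) ^ n) :=
        sum_congr rfl fun i hi =>
          S_mul_sign_mul_factorial_pred n (mem_Icc.1 hi).1 (mem_Icc.1 hi).2
    _ = ∑ m ∈ Icc 1 j, ∑ i ∈ Icc m j,
          (i.choose m : ℝ) / i * ((-1 : ℝ) ^ (j - m) / (m : ℝ) ^ n) :=
        sum_comm' fun i m => by simp only [mem_Icc]; omega
    _ = ∑ m ∈ Icc 1 j, (j.choose m : ℝ) / m * ((-1 : ℝ) ^ (j - m) / (m : ℝ) ^ n) := by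
        refine sum_congr rfl fun m hm => ?_
        rw [← sum_mul, sum_Icc_choose_div_self (mem_Icc.1 hm).1]
    _ = ∑ m ∈ Icc 1 j, (j.choose m : ℝ) * (-1 : ℝ) ^ (j - m) / (m : ℝ) ^ (n + 1) :=
        sum_congr rfl fun m _ => by ring

theorem stmt_13 (k j : ℕ) (hk : 1 ≤ k) (hj : 1 ≤ j) :
    S k j = (1 / (Nat.factorial j : ℝ)) *
      ∑ i ∈ Finset.Icc 1 j, S (k - 1) i * (-1 : ℝ) ^ (j - i) * (Nat.factorial (i - 1) : ℝ) :=
  stmt_13_general k j hk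
end

section
/- For every real number z with −1 < z < 1/2, −log(1−z) = Σ_{j=1}^{∞} (−1)^{j−1} · H_j · z^j / (1−z)^{j+1}, where the series on the right converges. -/
open Finset Real

theorem H_eq_sum_range (r n : ℕ) : H r n = ∑ k ∈ range n, 1 / ((k : ℝ) + 1) ^ r := by
  have h := sum_Ico_add' (fun m : ℕ => 1 / (m : ℝ) ^ r) 0 n 1
  simp only [zero_add, Nat.cast_add, Nat.cast_one, Ico_add_one_right_eq_Icc] at h
  rw [H, ← h, range_eq_Ico]

theorem sum_range_pow_succ_div_mul_pow (x : ℝ) (n : ℕ) :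
    ∑ k ∈ range (n + 1), x ^ (k + 1) / (k + 1) * x ^ (n - k) = H 1 (n + 1) * x ^ (n + 1) := by
  rw [H_eq_sum_range, sum_mul]
  refine sum_congr rfl fun k hk => ?_
  have hkn : k + 1 + (n - k) = n + 1 := by have := mem_range.mp hk; omega
  rw [← hkn, pow_add]
  ring

theorem hasSum_H_one_succ_mul_pow {x : ℝ} (hx : |x| < 1) :
    HasSum (fun n : ℕ => H 1 (n + 1) * x ^ (n + 1)) (-log (1 - x) / (1 - x)) := by
  have hlog := hasSum_pow_div_log_of_abs_lt_one hx
  have hgeom : HasSum (fun n : ℕ => x ^ n) (1 - x)⁻¹ := hasSum_geometric_of_abs_lt_one hx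
  have hlog_norm : Summable fun n : ℕ => ‖x ^ (n + 1) / (n + 1)‖ :=
    (hasSum_pow_div_log_of_abs_lt_one (x := |x|) (by rwa [abs_abs])).summable.congr fun n => by
      rw [norm_div, norm_pow, norm_eq_abs, norm_eq_abs,
        abs_of_pos (n.cast_add_one_pos : (0 : ℝ) < n + 1)]
  have hgeom_norm : Summable fun n : ℕ => ‖x ^ n‖ := by
    simpa only [norm_pow, norm_eq_abs] using summable_geometric_of_lt_one (abs_nonneg x) hx
  have hprod := hasSum_sum_range_mul_of_summable_norm hlog_norm hgeom_norm
  rw [hlog.tsum_eq, hgeom.tsum_eq, ← div_eq_mul_inv] at hprod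
  simpa only [sum_range_pow_succ_div_mul_pow] using hprod

theorem stmt_16_general (z : ℝ) (hz₂ : z < 1 / 2) :
    HasSum (fun j : ℕ => (-1 : ℝ) ^ j * H 1 (j + 1) * z ^ (j + 1) / (1 - z) ^ (j + 2))
      (-Real.log (1 - z)) := by
  have hz : 0 < 1 - z := by linarith
  have hx : |-z / (1 - z)| < 1 := by
    rw [abs_div, abs_of_pos hz, div_lt_one hz, abs_lt]
    constructor <;> linarith
  have h1x : 1 - -z / (1 - z) = (1 - z)⁻¹ := by field_simp; ring
  have hsum : -log (1 - z) = -(1 - z)⁻¹ * (-log (1 - -z / (1 - z)) / (1 - -z / (1 - z))) := by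
    rw [h1x, log_inv]
    field_simp
  rw [hsum]
  refine ((hasSum_H_one_succ_mul_pow hx).mul_left _).congr_fun fun j => ?_
  rw [div_pow, neg_pow z, pow_succ (-1 : ℝ), pow_succ (1 - z) (j + 1)]
  field_simp

theorem stmt_16 (z : ℝ) (hz₁ : -1 < z) (hz₂ : z < 1 / 2) :
    HasSum (fun j : ℕ => (-1 : ℝ) ^ j * H 1 (j + 1) * z ^ (j + 1) / (1 - z) ^ (j + 2))
      (-Real.log (1 - z)) :=
  stmt_16_general z hz₂
end

section
/- Apéry's constant ζ(3) := Σ_{n=1}^{∞} 1/n³ satisfies the two convergent series identities (3/4)·ζ(3) = Σ_{j=1}^{∞} (H_j³ + 3·H_j·H_j^{(2)} + 2·H_j^{(3)}) / (12 · 2^j) and (3/4)·ζ(3) = (1/6)·(log 2)³ + Σ_{j=1}^{∞} H_j · H_j^{(2)} / 2^{j+1}. -/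
open Finset

lemma H_zero (r : ℕ) : H r 0 = 0 := by simp [H]

lemma H_add_one (r n : ℕ) : H r (n + 1) = H r n + 1 / ((n : ℝ) + 1) ^ r := by
  rw [H, H, sum_Icc_succ_top (by omega)]
  push_cast
  ring

/-- `esymmRecip r n` and `hsymmRecip r n` are the elementary and the complete homogeneous
symmetric polynomials of degree `r` in `1, 1/2, …, 1/n`, obtained by splitting off the largest
index `m + 1` of each monomial. -/
noncomputable def esymmRecip : ℕ → ℕ → ℝ
  | 0, _ => 1
  | r + 1, n => ∑ m ∈ range n, esymmRecip r m / (m + 1)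

noncomputable def hsymmRecip : ℕ → ℕ → ℝ
  | 0, _ => 1
  | r + 1, n => ∑ m ∈ range n, hsymmRecip r (m + 1) / (m + 1)

@[simp] lemma esymmRecip_zero : esymmRecip 0 = 1 := rfl

@[simp] lemma hsymmRecip_zero : hsymmRecip 0 = 1 := rfl

@[simp] lemma esymmRecip_succ_zero (r : ℕ) : esymmRecip (r + 1) 0 = 0 := by simp [esymmRecip]

@[simp] lemma hsymmRecip_succ_zero (r : ℕ) : hsymmRecip (r + 1) 0 = 0 := by simp [hsymmRecip]

lemma esymmRecip_succ_add_one (r n : ℕ) :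
    esymmRecip (r + 1) (n + 1) = esymmRecip (r + 1) n + esymmRecip r n / (n + 1) := by
  simp only [esymmRecip, sum_range_succ]

lemma hsymmRecip_succ_add_one (r n : ℕ) :
    hsymmRecip (r + 1) (n + 1) = hsymmRecip (r + 1) n + hsymmRecip r (n + 1) / (n + 1) := by
  simp only [hsymmRecip, sum_range_succ]

lemma esymmRecip_nonneg (r n : ℕ) : 0 ≤ esymmRecip r n := by
  induction r generalizing n with
  | zero => simp
  | succ r ih => exact sum_nonneg fun m _ => div_nonneg (ih m) (by positivity)

lemma hsymmRecip_nonneg (r n : ℕ) : 0 ≤ hsymmRecip r n := by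
  induction r generalizing n with
  | zero => simp
  | succ r ih => exact sum_nonneg fun m _ => div_nonneg (ih _) (by positivity)

lemma esymmRecip_one (n : ℕ) : esymmRecip 1 n = H 1 n := by
  induction n with
  | zero => simp [H_zero]
  | succ n ih => simp [esymmRecip_succ_add_one, ih, H_add_one]

lemma hsymmRecip_one (n : ℕ) : hsymmRecip 1 n = H 1 n := by
  induction n with
  | zero => simp [H_zero]
  | succ n ih => simp [hsymmRecip_succ_add_one, ih, H_add_one]

lemma esymmRecip_two (n : ℕ) : esymmRecip 2 n = (H 1 n ^ 2 - H 2 n) / 2 := by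
  induction n with
  | zero => simp [H_zero]
  | succ n ih =>
    rw [esymmRecip_succ_add_one, ih, esymmRecip_one, H_add_one, H_add_one]
    field_simp
    ring

lemma hsymmRecip_two (n : ℕ) : hsymmRecip 2 n = (H 1 n ^ 2 + H 2 n) / 2 := by
  induction n with
  | zero => simp [H_zero]
  | succ n ih =>
    rw [hsymmRecip_succ_add_one, ih, hsymmRecip_one, H_add_one, H_add_one]
    field_simp
    ring

lemma esymmRecip_three (n : ℕ) :
    esymmRecip 3 n = (H 1 n ^ 3 - 3 * H 1 n * H 2 n + 2 * H 3 n) / 6 := by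
  induction n with
  | zero => simp [H_zero]
  | succ n ih =>
    rw [esymmRecip_succ_add_one, ih, esymmRecip_two, H_add_one, H_add_one, H_add_one]
    field_simp
    ring

lemma hsymmRecip_three (n : ℕ) :
    hsymmRecip 3 n = (H 1 n ^ 3 + 3 * H 1 n * H 2 n + 2 * H 3 n) / 6 := by
  induction n with
  | zero => simp [H_zero]
  | succ n ih =>
    rw [hsymmRecip_succ_add_one, ih, hsymmRecip_two, H_add_one, H_add_one, H_add_one]
    field_simp
    ring

lemma sum_range_choose_succ_mul_neg_one_pow (n : ℕ) :
    ∑ k ∈ range (n + 1), ((n + 1).choose (k + 1) : ℝ) * (-1) ^ k = 1 := by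
  have h : ∑ k ∈ range (n + 2), ((-1) ^ k * (n + 1).choose k : ℝ) = 0 := by
    exact_mod_cast Int.alternating_sum_range_choose_of_ne n.succ_ne_zero
  rw [sum_range_succ'] at h
  simp only [pow_succ, mul_neg_one, neg_mul, sum_neg_distrib, pow_zero, Nat.choose_zero_right,
    Nat.cast_one, one_mul] at h
  simp only [mul_comm] at h ⊢
  linarith

lemma sum_range_choose_mul_neg_one_pow_div_pow_succ (r n : ℕ) :
    ∑ k ∈ range (n + 1), (n.choose k : ℝ) * ((-1) ^ k / ((k : ℝ) + 1) ^ (r + 1)) =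
      (∑ k ∈ range (n + 1), ((n + 1).choose (k + 1) : ℝ) * ((-1) ^ k / ((k : ℝ) + 1) ^ r)) /
        (n + 1) := by
  rw [sum_div]
  refine sum_congr rfl fun k _ => ?_
  have h : (n.choose k : ℝ) = (n + 1).choose (k + 1) * ((k : ℝ) + 1) / (n + 1) := by
    rw [eq_div_iff (by positivity), mul_comm]
    exact_mod_cast Nat.add_one_mul_choose_eq n k
  rw [h, pow_succ]
  field_simp

lemma sum_range_choose_succ_mul_neg_one_pow_div_pow (r n : ℕ) :
    ∑ k ∈ range (n + 1), ((n + 1).choose (k + 1) : ℝ) * ((-1) ^ k / ((k : ℝ) + 1) ^ r) =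
      hsymmRecip r (n + 1) := by
  induction r generalizing n with
  | zero => simpa using sum_range_choose_succ_mul_neg_one_pow n
  | succ r ihr =>
    induction n with
    | zero => simpa [hsymmRecip] using ihr 0
    | succ n ihn =>
      set a : ℕ → ℝ := fun k => (-1) ^ k / ((k : ℝ) + 1) ^ (r + 1)
      have hpascal : ∑ k ∈ range (n + 2), ((n + 2).choose (k + 1) : ℝ) * a k =
          ∑ k ∈ range (n + 2), ((n + 1).choose k : ℝ) * a k +
            ∑ k ∈ range (n + 1), ((n + 1).choose (k + 1) : ℝ) * a k := by
        simp only [Nat.choose_succ_succ' (n + 1), Nat.cast_add, add_mul, sum_add_distrib,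
          sum_range_succ _ (n + 1), Nat.choose_succ_self, Nat.cast_zero, zero_mul, add_zero]
        ring
      rw [hsymmRecip_succ_add_one, ← ihn, ← ihr, hpascal,
        sum_range_choose_mul_neg_one_pow_div_pow_succ]
      push_cast
      ring

lemma HasSum.sum_antidiagonal {F : ℕ × ℕ → ℝ} {s : ℝ} (h : HasSum F s) :
    HasSum (fun n => ∑ kl ∈ antidiagonal n, F kl) s := by
  refine ((HasAntidiagonal.sigmaAntidiagonalEquivProd.hasSum_iff).2 h).sigma fun n => ?_
  rw [← sum_coe_sort]
  exact hasSum_fintype _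

theorem hasSum_sum_range_choose_mul_div_two_pow {a : ℕ → ℝ} {s : ℝ}
    (ha : Summable fun k => ‖a k‖) (h : HasSum a s) :
    HasSum (fun n => (∑ k ∈ range (n + 1), (n.choose k : ℝ) * a k) / 2 ^ (n + 1)) s := by
  -- Weighting `a k` by the negative binomial distribution `C(m+k, k) / 2^(m+k+1)` in `m` and
  -- regrouping by `n = m + k` is the transform.
  set w : ℕ → ℕ → ℝ := fun k m => ((m + k).choose k : ℝ) * (1 / 2) ^ m / 2 ^ (k + 1)
  have hw : ∀ k, HasSum (w k) 1 := by
    intro k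
    have := (hasSum_choose_mul_geometric_of_norm_lt_one k (r := (1 / 2 : ℝ)) (by norm_num)).div_const
      (2 ^ (k + 1))
    rwa [show (1 : ℝ) - 1 / 2 = 1 / 2 by norm_num, one_div_pow, one_div_one_div,
      div_self (by positivity)] at this
  have hw0 : ∀ k m, 0 ≤ w k m := fun k m => by positivity
  set F : ℕ × ℕ → ℝ := fun km => a km.1 * w km.1 km.2
  have hrow : ∀ k, HasSum (fun m => F (k, m)) (a k) := fun k => by
    simpa using (hw k).mul_left (a k)
  have hrow_norm : ∀ k, HasSum (fun m => ‖F (k, m)‖) ‖a k‖ := fun k => by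
    simpa [F, abs_mul, abs_of_nonneg (hw0 _ _)] using (hw k).mul_left ‖a k‖
  have hF : Summable F := by
    refine Summable.of_norm ((summable_prod_of_nonneg fun _ => norm_nonneg _).2
      ⟨fun k => (hrow_norm k).summable, ?_⟩)
    simpa only [(hrow_norm _).tsum_eq] using ha
  have hs : HasSum F s := (hF.hasSum.prod_fiberwise hrow).unique h ▸ hF.hasSum
  convert hs.sum_antidiagonal using 2 with n
  rw [Nat.sum_antidiagonal_eq_sum_range_succ_mk, sum_div]
  refine sum_congr rfl fun k hk => ?_
  have hkn : n - k + k = n := Nat.sub_add_cancel (by simpa [Nat.lt_succ_iff] using hk)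
  simp only [F, w, hkn]
  rw [show (2 : ℝ) ^ (n + 1) = 2 ^ (n - k) * 2 ^ (k + 1) by rw [← pow_add]; congr 1; omega,
    one_div_pow]
  field_simp

theorem hasSum_sum_range_mul_pow {g : ℕ → ℝ} {x s : ℝ} (hx : ‖x‖ < 1)
    (hg : Summable fun m => ‖g m * x ^ m‖) (h : HasSum (fun m => g m * x ^ m) s) :
    HasSum (fun n => (∑ m ∈ range (n + 1), g m) * x ^ n) (s * (1 - x)⁻¹) := by
  have := hasSum_sum_range_mul_of_summable_norm hg (summable_norm_geometric_of_norm_lt_one hx)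
  rw [h.tsum_eq, tsum_geometric_of_norm_lt_one hx] at this
  convert! this using 2 with n
  rw [sum_mul]
  refine sum_congr rfl fun m hm => ?_
  rw [mul_assoc, ← pow_add, Nat.add_sub_cancel' (Nat.lt_succ_iff.mp (mem_range.mp hm))]

lemma hasSum_sum_range_div_two_pow {g : ℕ → ℝ} {s : ℝ} (hg : ∀ m, 0 ≤ g m)
    (h : HasSum (fun m => g m / 2 ^ (m + 1)) s) :
    HasSum (fun n => (∑ m ∈ range (n + 1), g m) / 2 ^ (n + 2)) s := by
  have h' : HasSum (fun m => g m * (1 / 2) ^ m) (2 * s) := by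
    convert! h.mul_left 2 using 2 with m
    rw [one_div_pow, pow_succ]
    field_simp
  have hnorm : Summable fun m => ‖g m * (1 / 2 : ℝ) ^ m‖ := by
    simpa [abs_of_nonneg (hg _)] using h'.summable
  convert! (hasSum_sum_range_mul_pow (by norm_num) hnorm h').div_const 4 using 1
  · ext n
    rw [one_div_pow, pow_add]
    field_simp
    ring
  · norm_num
    ring

lemma hasSum_neg_one_pow_div_pow {p : ℕ} {z : ℝ}
    (hz : HasSum (fun n : ℕ => 1 / ((n : ℝ) + 1) ^ p) z) :
    HasSum (fun n : ℕ => (-1) ^ n / ((n : ℝ) + 1) ^ p) ((1 - 2 / 2 ^ p) * z) := by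
  set oddTerms : ℕ → ℝ := fun n => if Odd n then 2 / ((n : ℝ) + 1) ^ p else 0
  have hodd : HasSum oddTerms (2 / 2 ^ p * z) := by
    have hinj : Function.Injective fun n : ℕ => 2 * n + 1 := fun a b h => by simpa using h
    rw [← hinj.hasSum_iff]
    · convert! hz.mul_left (2 / 2 ^ p) using 1
      ext n
      simp only [oddTerms, Function.comp_apply, odd_two_mul_add_one, if_true]
      push_cast
      rw [show (2 : ℝ) * n + 1 + 1 = 2 * (n + 1) by ring, mul_pow]
      field_simp
    · rintro n hn
      simp only [oddTerms, ite_eq_right_iff]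
      rintro ⟨m, rfl⟩
      exact absurd ⟨m, by ring⟩ hn
  convert! hz.sub hodd using 1
  · ext n
    rcases n.even_or_odd with hn | hn
    · simp [oddTerms, hn.neg_one_pow, Nat.not_odd_iff_even.mpr hn]
    · simp only [oddTerms, hn.neg_one_pow, hn, if_true]
      ring
  · ring

section PowerSeries

open PowerSeries

variable {x : ℝ}

lemma coeff_mul_mul_pow (φ ψ : ℝ⟦X⟧) (n : ℕ) :
    coeff n (φ * ψ) * x ^ n =
      ∑ ij ∈ antidiagonal n, coeff ij.1 φ * x ^ ij.1 * (coeff ij.2 ψ * x ^ ij.2) := by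
  rw [coeff_mul, sum_mul]
  refine sum_congr rfl fun ij hij => ?_
  rw [← mem_antidiagonal.mp hij, pow_add]
  ring

variable {φ : ℝ⟦X⟧}

lemma summable_norm_coeff_pow_mul_pow (hφ : Summable fun n => ‖coeff n φ * x ^ n‖) (k : ℕ) :
    Summable fun n => ‖coeff n (φ ^ k) * x ^ n‖ := by
  induction k with
  | zero =>
    refine summable_of_ne_finset_zero (s := {0}) fun n hn => ?_
    simp_all [coeff_one]
  | succ k ih =>
    simpa only [pow_succ, coeff_mul_mul_pow] using
      summable_norm_sum_mul_antidiagonal_of_summable_norm ih hφ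

lemma tsum_coeff_pow_mul_pow (hφ : Summable fun n => ‖coeff n φ * x ^ n‖) (k : ℕ) :
    ∑' n, coeff n (φ ^ k) * x ^ n = (∑' n, coeff n φ * x ^ n) ^ k := by
  induction k with
  | zero => simp [coeff_one]
  | succ k ih =>
    simp only [pow_succ, coeff_mul_mul_pow, ← ih]
    exact (tsum_mul_tsum_eq_tsum_sum_antidiagonal_of_summable_norm
      (summable_norm_coeff_pow_mul_pow hφ k) hφ).symm

lemma hasSum_coeff_X_mul_mul_pow_iff {a : ℝ} :
    HasSum (fun n => coeff n (X * φ) * x ^ n) a ↔ HasSum (fun n => coeff n φ * x ^ (n + 1)) a := by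
  rw [← hasSum_nat_add_iff' 1]
  simp [coeff_succ_X_mul]

/-- For `r = 0` this is the series of `-log(1 - X)`. -/
noncomputable def esymmSeries (r : ℕ) : ℝ⟦X⟧ := X * PowerSeries.mk fun n => esymmRecip r n / (n + 1)

lemma derivative_esymmSeries (r : ℕ) : d⁄dX ℝ (esymmSeries r) = PowerSeries.mk (esymmRecip r) := by
  ext n
  rw [coeff_derivative, esymmSeries, coeff_succ_X_mul, coeff_mk, coeff_mk]
  field_simp

lemma mk_esymmRecip_succ (r : ℕ) :
    PowerSeries.mk (esymmRecip (r + 1)) = esymmSeries r * PowerSeries.mk 1 := by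
  have h : (1 - X) * PowerSeries.mk (esymmRecip (r + 1)) = esymmSeries r := by
    ext (_ | n)
    · simp [esymmSeries, sub_mul]
    · simp [esymmSeries, sub_mul, coeff_succ_X_mul, esymmRecip_succ_add_one]
  rw [← h, mul_comm, ← mul_assoc, mk_one_mul_one_sub_eq_one, one_mul]

lemma esymmSeries_zero_pow (r : ℕ) :
    esymmSeries 0 ^ (r + 1) = ((r + 1).factorial : ℝ) • esymmSeries r := by
  induction r with
  | zero => simp
  | succ r ih =>
    refine derivative.ext ?_ ?_
    · rw [derivative_pow, Nat.add_sub_cancel, ih, derivative_esymmSeries,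
        Derivation.map_smul, derivative_esymmSeries, mk_esymmRecip_succ]
      simp only [esymmRecip_zero, Algebra.smul_def, Nat.factorial_succ (r + 1), Nat.cast_mul,
        map_mul, map_natCast]
      ring
    · simp [esymmSeries]

lemma hasSum_coeff_esymmSeries_zero_mul_pow (hx : |x| < 1) :
    HasSum (fun n => coeff n (esymmSeries 0) * x ^ n) (-Real.log (1 - x)) := by
  rw [esymmSeries, hasSum_coeff_X_mul_mul_pow_iff]
  simpa [div_eq_inv_mul] using Real.hasSum_pow_div_log_of_abs_lt_one hx

lemma summable_norm_coeff_esymmSeries_zero_mul_pow (hx : |x| < 1) :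
    Summable fun n => ‖coeff n (esymmSeries 0) * x ^ n‖ := by
  refine (hasSum_coeff_esymmSeries_zero_mul_pow (x := |x|) (by rwa [abs_abs])).summable.congr
    fun n => ?_
  have h0 : 0 ≤ coeff n (esymmSeries 0) := by
    rcases n with _ | n
    · simp [esymmSeries]
    · simp [esymmSeries, coeff_succ_X_mul]
      positivity
  rw [norm_mul, norm_pow, Real.norm_eq_abs, Real.norm_eq_abs, abs_of_nonneg h0]

theorem hasSum_esymmRecip_mul_pow_div (r : ℕ) (hx : |x| < 1) :
    HasSum (fun n => esymmRecip r n * x ^ (n + 1) / (n + 1))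
      ((-Real.log (1 - x)) ^ (r + 1) / (r + 1).factorial) := by
  have hnorm := summable_norm_coeff_esymmSeries_zero_mul_pow hx
  have hpow := (summable_norm_coeff_pow_mul_pow hnorm (r + 1)).of_norm.hasSum
  rw [tsum_coeff_pow_mul_pow hnorm, (hasSum_coeff_esymmSeries_zero_mul_pow hx).tsum_eq,
    esymmSeries_zero_pow] at hpow
  have h := (hpow.div_const ((r + 1).factorial : ℝ)).congr_fun fun n => by
    rw [coeff_smul, smul_eq_mul, mul_assoc, mul_div_cancel_left₀ _ (by positivity)]
  rw [esymmSeries, hasSum_coeff_X_mul_mul_pow_iff] at h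
  exact h.congr_fun fun n => by rw [coeff_mk]; ring

end PowerSeries

lemma hasSum_hsymmRecip_three_div_two_pow {z : ℝ}
    (hz : HasSum (fun n : ℕ => 1 / ((n : ℝ) + 1) ^ 3) z) :
    HasSum (fun n => hsymmRecip 3 (n + 1) / 2 ^ (n + 2)) (3 / 4 * z) := by
  have heta := hasSum_neg_one_pow_div_pow hz
  have hnorm : Summable fun k : ℕ => ‖(-1) ^ k / ((k : ℝ) + 1) ^ 3‖ :=
    hz.summable.congr fun k => by simp [abs_of_pos (by positivity : (0 : ℝ) < k + 1)]
  have heuler := hasSum_sum_range_choose_mul_div_two_pow hnorm heta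
  simp only [sum_range_choose_mul_neg_one_pow_div_pow_succ,
    sum_range_choose_succ_mul_neg_one_pow_div_pow] at heuler
  norm_num at heuler
  exact hasSum_sum_range_div_two_pow (fun m => div_nonneg (hsymmRecip_nonneg _ _) (by positivity))
    heuler

lemma hasSum_esymmRecip_three_div_two_pow :
    HasSum (fun n => esymmRecip 3 (n + 1) / 2 ^ (n + 2)) (Real.log 2 ^ 3 / 6) := by
  have h := hasSum_esymmRecip_mul_pow_div 2 (x := 1 / 2) (by norm_num [abs_of_pos])
  rw [show (1 : ℝ) - 1 / 2 = 2⁻¹ by norm_num, Real.log_inv, neg_neg] at h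
  norm_num [Nat.factorial] at h
  refine hasSum_sum_range_div_two_pow (fun m => div_nonneg (esymmRecip_nonneg _ _) (by positivity))
    (h.congr_fun fun n => ?_)
  rw [one_div_pow]
  field_simp

theorem stmt_19 (z3 : ℝ) (hz3 : HasSum (fun n : ℕ => 1 / ((n : ℝ) + 1) ^ 3) z3) :
    HasSum (fun j : ℕ =>
        ((H 1 (j + 1)) ^ 3 + 3 * H 1 (j + 1) * H 2 (j + 1) + 2 * H 3 (j + 1))
          / (12 * 2 ^ (j + 1))) (3 / 4 * z3) ∧
    HasSum (fun j : ℕ => H 1 (j + 1) * H 2 (j + 1) / 2 ^ (j + 2))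
      (3 / 4 * z3 - (Real.log 2) ^ 3 / 6) := by
  have hh := hasSum_hsymmRecip_three_div_two_pow hz3
  have he := hasSum_esymmRecip_three_div_two_pow
  constructor
  · refine hh.congr_fun fun j => ?_
    rw [hsymmRecip_three, pow_succ]
    field_simp
    ring
  · refine (hh.sub he).congr_fun fun j => ?_
    rw [hsymmRecip_three, esymmRecip_three]
    field_simp
    ring
end
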